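/- arXiv:2508.02125 — 7 statements merged into one kernel-verified Lean document; each statement's English description precedes it below -/
import Mathlib

section
/- For a finite simple graph G without isolated vertices, B(G) = 2 if and only if G has a pair of twins, i.e., two distinct vertices x, y with N(x) = N(y) or N[x] = N[y]. -/
/-- A vertex is (eventually) black in the zero forcing process started
from the initial black set `B`: either it is in `B`, or some black vertex
has it as its unique white neighbor. -/
inductive SimpleGraph.Forced {V : Type*} (G : SimpleGraph V) (B : Set V) : V → Prop
  | init {v : V} : v ∈ B → SimpleGraph.Forced G B v
  | force {u w : V} : SimpleGraph.Forced G B u → G.Adj u w →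
      (∀ x, G.Adj u x → x ≠ w → SimpleGraph.Forced G B x) → SimpleGraph.Forced G B w

/-- `B` is a zero forcing set: the process colors every vertex black. -/
def SimpleGraph.IsZeroForcing {V : Type*} (G : SimpleGraph V) (B : Set V) : Prop :=
  ∀ v, G.Forced B v

/-- `W` is a zero blocking set: its complement is a failed zero forcing set. -/
def SimpleGraph.IsZeroBlocking {V : Type*} (G : SimpleGraph V) (W : Set V) : Prop :=
  ¬ G.IsZeroForcing Wᶜ

/-- The zero blocking number `B(G)`: minimum size of a zero blocking set. -/
noncomputable def SimpleGraph.zeroBlockingNumber {V : Type*} (G : SimpleGraph V) : ℕ :=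
  sInf {m | ∃ W : Set V, G.IsZeroBlocking W ∧ W.ncard = m}

/-- The failed zero forcing number `F(G)`: maximum size of a failed zero forcing set. -/
noncomputable def SimpleGraph.failedZeroForcingNumber {V : Type*} (G : SimpleGraph V) : ℕ :=
  sSup {m | ∃ B : Set V, ¬ G.IsZeroForcing B ∧ B.ncard = m}

/-- The generalized Kneser graph `K(n,k,a)`: vertices are the `k`-subsets of `[n]`,
`A` adjacent to `B` iff `A ≠ B` and `|A ∩ B| ≤ a`. -/
def genKneser (n k a : ℕ) : SimpleGraph {s : Finset (Fin n) // s.card = k} where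
  Adj A B := A ≠ B ∧ ((A : Finset (Fin n)) ∩ (B : Finset (Fin n))).card ≤ a
  symm := ⟨fun A B ⟨h1, h2⟩ => ⟨h1.symm, by rwa [Finset.inter_comm]⟩⟩
  loopless := ⟨fun A h => h.1 rfl⟩

/-- The generalized Johnson graph `J(n,k,a)`: vertices are the `k`-subsets of `[n]`,
`A` adjacent to `B` iff `A ≠ B` and `|A ∩ B| = a`. -/
def genJohnson (n k a : ℕ) : SimpleGraph {s : Finset (Fin n) // s.card = k} where
  Adj A B := A ≠ B ∧ ((A : Finset (Fin n)) ∩ (B : Finset (Fin n))).card = a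
  symm := ⟨fun A B ⟨h1, h2⟩ => ⟨h1.symm, by rwa [Finset.inter_comm]⟩⟩
  loopless := ⟨fun A h => h.1 rfl⟩

section Helpers

variable {V : Type*} (G : SimpleGraph V)

/-- If some vertex `u ∉ {x,y}` is adjacent to `x` but not `y`, forcing from `{x,y}ᶜ` succeeds. -/
lemma force_succeeds (h : ∀ v : V, ∃ w : V, G.Adj v w)
    {x y u : V} (hux : G.Adj u x) (huy : ¬ G.Adj u y) (huney : u ≠ y) :
    G.IsZeroForcing ({x, y} : Set V)ᶜ := by
  have hmem : ∀ v : V, v ≠ x → v ≠ y → G.Forced ({x, y} : Set V)ᶜ v := by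
    intro v hvx hvy
    exact SimpleGraph.Forced.init (by simp [hvx, hvy])
  have hx : G.Forced ({x, y} : Set V)ᶜ x := by
    refine SimpleGraph.Forced.force (u := u) (hmem u hux.ne huney) hux ?_
    intro v huv hvx
    refine hmem v hvx ?_
    rintro rfl; exact huy huv
  have hy : G.Forced ({x, y} : Set V)ᶜ y := by
    obtain ⟨w, hyw⟩ := h y
    have hwF : G.Forced ({x, y} : Set V)ᶜ w := by
      by_cases hwx : w = x
      · subst hwx; exact hx
      · exact hmem w hwx hyw.ne'
    refine SimpleGraph.Forced.force (u := w) hwF hyw.symm ?_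
    intro v hwv hvy
    by_cases hvx : v = x
    · subst hvx; exact hx
    · exact hmem v hvx hvy
  intro v
  by_cases hvx : v = x
  · subst hvx; exact hx
  by_cases hvy : v = y
  · subst hvy; exact hy
  exact hmem v hvx hvy

/-- Twins give a blocking pair. -/
lemma blocked_of_twins {x y : V} (hxy : x ≠ y)
    (htw : G.neighborSet x = G.neighborSet y ∨
      insert x (G.neighborSet x) = insert y (G.neighborSet y)) :
    G.IsZeroBlocking ({x, y} : Set V) := by
  intro hforce
  have key : ∀ v, G.Forced ({x, y} : Set V)ᶜ v → v ≠ x ∧ v ≠ y := by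
    intro v hv
    induction hv with
    | init hm => simpa using hm
    | @force u w hu hadj hall ihu ihall =>
        constructor
        · intro hwx
          have hadx : G.Adj u x := hwx ▸ hadj
          have huy : G.Adj u y := by
            rcases htw with hN | hN
            · have hmx : u ∈ G.neighborSet x := hadx.symm
              rw [hN] at hmx
              have : G.Adj y u := hmx
              exact this.symm
            · have hmx : u ∈ insert x (G.neighborSet x) :=
                Set.mem_insert_of_mem _ (hadx.symm : u ∈ G.neighborSet x)
              rw [hN] at hmx
              rcases hmx with h1 | h1
              · exact absurd h1 ihu.2
              · have : G.Adj y u := h1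
                exact this.symm
          have hynw : y ≠ w := by rw [hwx]; exact hxy.symm
          exact (ihall y huy hynw).2 rfl
        · intro hwy
          have hady : G.Adj u y := hwy ▸ hadj
          have hux : G.Adj u x := by
            rcases htw with hN | hN
            · have hmy : u ∈ G.neighborSet y := hady.symm
              rw [← hN] at hmy
              have : G.Adj x u := hmy
              exact this.symm
            · have hmy : u ∈ insert y (G.neighborSet y) :=
                Set.mem_insert_of_mem _ (hady.symm : u ∈ G.neighborSet y)
              rw [← hN] at hmy
              rcases hmy with h1 | h1
              · exact absurd h1 ihu.1
              · have : G.Adj x u := h1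
                exact this.symm
          have hxnw : x ≠ w := by rw [hwy]; exact hxy
          exact (ihall x hux hxnw).1 rfl
  exact (key x (hforce x)).1 rfl

end Helpers

theorem stmt3 {V : Type*} [Fintype V] (G : SimpleGraph V)
    (h : ∀ v : V, ∃ w : V, G.Adj v w) :
    G.zeroBlockingNumber = 2 ↔
      ∃ x y : V, x ≠ y ∧
        (G.neighborSet x = G.neighborSet y ∨
          insert x (G.neighborSet x) = insert y (G.neighborSet y)) := by
  constructor
  · intro hB
    have hne : {m | ∃ W : Set V, G.IsZeroBlocking W ∧ W.ncard = m}.Nonempty := by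
      by_contra h'
      rw [Set.not_nonempty_iff_eq_empty] at h'
      rw [SimpleGraph.zeroBlockingNumber, h', Nat.sInf_empty] at hB
      exact two_ne_zero hB.symm
    have hmem := Nat.sInf_mem hne
    rw [show sInf {m | ∃ W : Set V, G.IsZeroBlocking W ∧ W.ncard = m} = G.zeroBlockingNumber from rfl, hB] at hmem
    obtain ⟨W, hW, hcard⟩ := hmem
    obtain ⟨x, y, hxy, rfl⟩ := Set.ncard_eq_two.mp hcard
    refine ⟨x, y, hxy, ?_⟩
    by_contra htw
    push_neg at htw
    obtain ⟨hN1, hN2⟩ := htw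
    -- derive a witness u
    have hcase : (∃ u, G.Adj u x ∧ ¬ G.Adj u y ∧ u ≠ y) ∨ (∃ u, G.Adj u y ∧ ¬ G.Adj u x ∧ u ≠ x) := by
      by_contra hc
      push_neg at hc
      obtain ⟨hc1, hc2⟩ := hc
      -- hc1 : ∀ u, Adj u x → Adj u y ∨ u = y   (after push_neg: Adj u x → ¬Adj u y → u = y)
      by_cases hadj : G.Adj x y
      · apply hN2
        ext u
        simp only [Set.mem_insert_iff, SimpleGraph.mem_neighborSet]
        constructor
        · rintro (rfl | hxu)
          · exact Or.inr hadj.symm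
          · by_cases huy : G.Adj u y
            · exact Or.inr huy.symm
            · exact Or.inl (hc1 u hxu.symm huy)
        · rintro (rfl | hyu)
          · exact Or.inr hadj
          · by_cases hux : G.Adj u x
            · exact Or.inr hux.symm
            · exact Or.inl (hc2 u hyu.symm hux)
      · apply hN1
        ext u
        simp only [SimpleGraph.mem_neighborSet]
        constructor
        · intro hxu
          by_cases huy : G.Adj u y
          · exact huy.symm
          · exact absurd (hc1 u hxu.symm huy ▸ hxu) hadj
        · intro hyu
          by_cases hux : G.Adj u x
          · exact hux.symm
          · exact absurd (hc2 u hyu.symm hux ▸ hyu) (fun hh => hadj hh.symm)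
    rcases hcase with ⟨u, hux, huy, huney⟩ | ⟨u, huy, hux, hunex⟩
    · exact hW (force_succeeds G h hux huy huney)
    · have : G.IsZeroForcing ({y, x} : Set V)ᶜ := force_succeeds G h huy hux hunex
      apply hW
      rw [Set.pair_comm x y]
      exact this
  · rintro ⟨x, y, hxy, htw⟩
    have hblk := blocked_of_twins G hxy htw
    have hcard : ({x, y} : Set V).ncard = 2 := Set.ncard_pair hxy
    have h2 : 2 ∈ {m | ∃ W : Set V, G.IsZeroBlocking W ∧ W.ncard = m} := ⟨{x, y}, hblk, hcard⟩
    have hle : G.zeroBlockingNumber ≤ 2 := Nat.sInf_le h2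
    have hge : 2 ≤ G.zeroBlockingNumber := by
      have hne : {m | ∃ W : Set V, G.IsZeroBlocking W ∧ W.ncard = m}.Nonempty := ⟨2, h2⟩
      have hmem := Nat.sInf_mem hne
      obtain ⟨W, hW, hWcard⟩ := hmem
      have hWcard' : W.ncard = G.zeroBlockingNumber := hWcard
      rcases Nat.lt_or_ge G.zeroBlockingNumber 2 with hlt | hge'
      · exfalso
        interval_cases hh : G.zeroBlockingNumber
        · have hWfin : W.Finite := Set.toFinite W
          have : W = ∅ := (Set.ncard_eq_zero hWfin).mp hWcard'
          subst this
          exact hW (fun v => SimpleGraph.Forced.init (by simp))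
        · obtain ⟨w, rfl⟩ := Set.ncard_eq_one.mp hWcard'
          apply hW
          have hmem : ∀ v : V, v ≠ w → G.Forced ({w} : Set V)ᶜ v :=
            fun v hv => SimpleGraph.Forced.init (by simp [hv])
          have hwF : G.Forced ({w} : Set V)ᶜ w := by
            obtain ⟨u, hwu⟩ := h w
            refine SimpleGraph.Forced.force (u := u) (hmem u hwu.ne') hwu.symm ?_
            intro v huv hvw
            exact hmem v hvw
          intro v
          by_cases hv : v = w
          · subst hv; exact hwF
          · exact hmem v hv
      · exact hge'
    omega
end

section
/- Suppose n ≥ 2k - a, k - 2 ≥ a ≥ 0, and (n,a) ≠ (2k,0). Then the generalized Kneser graph K(n,k,a) has no isolated vertices and no pair of twins, and consequently B(K(n,k,a)) ≥ 3. -/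
lemma kneser_dist (n k a : ℕ) (hak : a + 2 ≤ k) (hn : 2 * k ≤ n + a)
    (hne : ¬ (n = 2 * k ∧ a = 0))
    (A B : Finset (Fin n)) (hA : A.card = k) (hB : B.card = k) (hAB : A ≠ B) :
    ∃ C : Finset (Fin n), C.card = k ∧ (C ∩ A).card ≤ a ∧ a + 1 ≤ (C ∩ B).card ∧ C ≠ B := by
  set t := (A ∩ B).card with ht
  have hBA : (B \ A).Nonempty := by
    rw [Finset.sdiff_nonempty]
    intro hsub
    exact hAB ((Finset.eq_of_subset_of_card_le hsub (by omega)).symm)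
  have hsB : (B \ A).card + t = k := by
    rw [ht, Finset.inter_comm]; rw [Finset.card_sdiff_add_card_inter, hB]
  have htk : t < k := by
    have := Finset.card_pos.2 hBA; omega
  have hUcard : (A ∪ B).card + t = 2 * k := by
    have := Finset.card_union_add_card_inter A B
    omega
  have hCcard : ((A ∪ B)ᶜ).card = n - (A ∪ B).card := by
    rw [Finset.card_compl, Fintype.card_fin]
  have hUn : (A ∪ B).card ≤ n := Finset.card_le_univ _ |>.trans (by simp)
  by_cases hta : a + 1 ≤ t
  · -- open case: C = (a-subset of A∩B) ∪ (B\A) ∪ ((t-a)-subset of (A∪B)ᶜ)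
    obtain ⟨P, hPsub, hPcard⟩ := Finset.exists_subset_card_eq (show a ≤ (A ∩ B).card by omega)
    obtain ⟨M, hMsub, hMcard⟩ := Finset.exists_subset_card_eq
      (show t - a ≤ ((A ∪ B)ᶜ).card by omega)
    refine ⟨P ∪ (B \ A) ∪ M, ?_, ?_, ?_, ?_⟩
    · have d1 : Disjoint P (B \ A) := by
        refine Finset.disjoint_left.2 fun x hx hx' => ?_
        exact (Finset.mem_sdiff.1 hx').2 (Finset.mem_inter.1 (hPsub hx)).1
      have d2 : Disjoint (P ∪ (B \ A)) M := by
        refine Finset.disjoint_left.2 fun x hx hx' => ?_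
        have hxc := Finset.mem_compl.1 (hMsub hx')
        rcases Finset.mem_union.1 hx with h | h
        · exact hxc (Finset.mem_union_left _ (Finset.mem_inter.1 (hPsub h)).1)
        · exact hxc (Finset.mem_union_right _ (Finset.mem_sdiff.1 h).1)
      rw [Finset.card_union_of_disjoint d2, Finset.card_union_of_disjoint d1,
        hPcard, hMcard]
      omega
    · -- (C ∩ A).card ≤ a : C ∩ A = P
      have : (P ∪ (B \ A) ∪ M) ∩ A ⊆ P := by
        intro x hx
        obtain ⟨hx1, hx2⟩ := Finset.mem_inter.1 hx
        rcases Finset.mem_union.1 hx1 with h | h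
        · rcases Finset.mem_union.1 h with h | h
          · exact h
          · exact absurd hx2 (Finset.mem_sdiff.1 h).2
        · exact absurd (Finset.mem_union_left _ hx2) (Finset.mem_compl.1 (hMsub h))
      calc ((P ∪ (B \ A) ∪ M) ∩ A).card ≤ P.card := Finset.card_le_card this
        _ = a := hPcard
    · -- a+1 ≤ (C ∩ B).card : contains P ∪ (B\A)
      have hsub : P ∪ (B \ A) ⊆ (P ∪ (B \ A) ∪ M) ∩ B := by
        intro x hx
        refine Finset.mem_inter.2 ⟨Finset.mem_union_left _ hx, ?_⟩
        rcases Finset.mem_union.1 hx with h | h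
        · exact (Finset.mem_inter.1 (hPsub h)).2
        · exact (Finset.mem_sdiff.1 h).1
      have d1 : Disjoint P (B \ A) := by
        refine Finset.disjoint_left.2 fun x hx hx' => ?_
        exact (Finset.mem_sdiff.1 hx').2 (Finset.mem_inter.1 (hPsub hx)).1
      have := Finset.card_le_card hsub
      rw [Finset.card_union_of_disjoint d1, hPcard] at this
      have := Finset.card_pos.2 hBA
      omega
    · -- C ≠ B
      intro h
      have : (B ∩ A).card ≤ a := by
        calc (B ∩ A).card = ((P ∪ (B \ A) ∪ M) ∩ A).card := by rw [h]
          _ ≤ P.card := Finset.card_le_card (by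
              intro x hx
              obtain ⟨hx1, hx2⟩ := Finset.mem_inter.1 hx
              rcases Finset.mem_union.1 hx1 with h' | h' 
              · rcases Finset.mem_union.1 h' with h' | h'
                · exact h'
                · exact absurd hx2 (Finset.mem_sdiff.1 h').2
              · exact absurd (Finset.mem_union_left _ hx2) (Finset.mem_compl.1 (hMsub h')))
          _ = a := hPcard
      rw [Finset.inter_comm] at this
      omega
  · -- closed case: t ≤ a. C = insert z (B.erase y) with z ∉ B, y ∈ B.
    have hta' : t ≤ a := by omega
    -- choose z and y according to subcases
    have key : ∃ z y, z ∉ B ∧ y ∈ B ∧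
        (insert z (B.erase y) ∩ A).card ≤ a := by
      by_cases hcompl : ((A ∪ B)ᶜ).Nonempty
      · obtain ⟨z, hz⟩ := hcompl
        obtain ⟨y, hy⟩ := hBA
        have hzA : z ∉ A := fun h => (Finset.mem_compl.1 hz) (Finset.mem_union_left _ h)
        have hzB : z ∉ B := fun h => (Finset.mem_compl.1 hz) (Finset.mem_union_right _ h)
        refine ⟨z, y, hzB, (Finset.mem_sdiff.1 hy).1, ?_⟩
        have : insert z (B.erase y) ∩ A ⊆ B ∩ A := by
          intro x hx
          obtain ⟨hx1, hx2⟩ := Finset.mem_inter.1 hx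
          rcases Finset.mem_insert.1 hx1 with rfl | h
          · exact absurd hx2 hzA
          · exact Finset.mem_inter.2 ⟨Finset.mem_of_mem_erase h, hx2⟩
        calc (insert z (B.erase y) ∩ A).card ≤ (B ∩ A).card := Finset.card_le_card this
          _ = t := by rw [ht, Finset.inter_comm]
          _ ≤ a := hta'
      · -- complement empty
        have hAB' : (A \ B).Nonempty := by
          rw [Finset.sdiff_nonempty]
          intro hsub
          exact hAB (Finset.eq_of_subset_of_card_le hsub (by omega))
        obtain ⟨z, hz⟩ := hAB'
        have hzA : z ∈ A := (Finset.mem_sdiff.1 hz).1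
        have hzB : z ∉ B := (Finset.mem_sdiff.1 hz).2
        by_cases hta2 : t < a
        · obtain ⟨y, hy⟩ := hBA
          refine ⟨z, y, hzB, (Finset.mem_sdiff.1 hy).1, ?_⟩
          have : insert z (B.erase y) ∩ A ⊆ insert z (B ∩ A) := by
            intro x hx
            obtain ⟨hx1, hx2⟩ := Finset.mem_inter.1 hx
            rcases Finset.mem_insert.1 hx1 with rfl | h
            · exact Finset.mem_insert_self _ _
            · exact Finset.mem_insert_of_mem
                (Finset.mem_inter.2 ⟨Finset.mem_of_mem_erase h, hx2⟩)
          calc (insert z (B.erase y) ∩ A).card ≤ (insert z (B ∩ A)).card :=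
                Finset.card_le_card this
            _ ≤ (B ∩ A).card + 1 := Finset.card_insert_le _ _
            _ = t + 1 := by rw [ht, Finset.inter_comm]
            _ ≤ a := by omega
        · -- t = a, complement empty
          have hteq : t = a := by omega
          -- if a = 0 then n = 2k and a = 0, contradiction
          have hcompl0 : ((A ∪ B)ᶜ).card = 0 := by
            rwa [Finset.not_nonempty_iff_eq_empty, ← Finset.card_eq_zero] at hcompl
          have ha1 : 1 ≤ a := by
            by_contra h
            exact hne ⟨by omega, by omega⟩
          have hABne : (A ∩ B).Nonempty := Finset.card_pos.1 (by omega)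
          obtain ⟨y, hy⟩ := hABne
          refine ⟨z, y, hzB, (Finset.mem_inter.1 hy).2, ?_⟩
          have hyBA : y ∈ B ∩ A := Finset.mem_inter.2
            ⟨(Finset.mem_inter.1 hy).2, (Finset.mem_inter.1 hy).1⟩
          have : insert z (B.erase y) ∩ A ⊆ insert z ((B ∩ A).erase y) := by
            intro x hx
            obtain ⟨hx1, hx2⟩ := Finset.mem_inter.1 hx
            rcases Finset.mem_insert.1 hx1 with rfl | h
            · exact Finset.mem_insert_self _ _
            · refine Finset.mem_insert_of_mem (Finset.mem_erase.2
                ⟨(Finset.mem_erase.1 h).1,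
                 Finset.mem_inter.2 ⟨Finset.mem_of_mem_erase h, hx2⟩⟩)
          calc (insert z (B.erase y) ∩ A).card ≤ (insert z ((B ∩ A).erase y)).card :=
                Finset.card_le_card this
            _ ≤ ((B ∩ A).erase y).card + 1 := Finset.card_insert_le _ _
            _ = (B ∩ A).card - 1 + 1 := by rw [Finset.card_erase_of_mem hyBA]
            _ ≤ a := by
                have : (B ∩ A).card = t := by rw [ht, Finset.inter_comm]
                omega
    obtain ⟨z, y, hzB, hyB, hcard⟩ := key
    refine ⟨insert z (B.erase y), ?_, hcard, ?_, ?_⟩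
    · rw [Finset.card_insert_of_notMem (fun h => hzB (Finset.mem_of_mem_erase h)),
        Finset.card_erase_of_mem hyB, hB]
      omega
    · have : B.erase y ⊆ insert z (B.erase y) ∩ B := by
        intro x hx
        exact Finset.mem_inter.2 ⟨Finset.mem_insert_of_mem hx, Finset.mem_of_mem_erase hx⟩
      have h1 := Finset.card_le_card this
      rw [Finset.card_erase_of_mem hyB, hB] at h1
      omega
    · intro h
      exact hzB (h ▸ Finset.mem_insert_self z (B.erase y))


variable {V : Type*}

lemma pair_helper (G : SimpleGraph V) (w1 w2 : V) (h12 : w1 ≠ w2)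
    (u : V) (hu1 : G.Adj u w1) (hu2 : ¬ G.Adj u w2) (huw2 : u ≠ w2)
    (hsec : G.Adj w1 w2 ∨ ∃ v, G.Adj v w2 ∧ v ≠ w1) :
    G.IsZeroForcing ({w1, w2} : Set V)ᶜ := by
  have hmem : ∀ x : V, x ≠ w1 → x ≠ w2 → x ∈ ({w1, w2} : Set V)ᶜ := by
    intro x h1 h2
    simp [h1, h2]
  have huw1 : u ≠ w1 := G.ne_of_adj hu1
  have hf1 : G.Forced ({w1, w2} : Set V)ᶜ w1 := by
    refine SimpleGraph.Forced.force (SimpleGraph.Forced.init (hmem u huw1 huw2)) hu1 ?_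
    intro x hx hxw1
    exact SimpleGraph.Forced.init (hmem x hxw1 (fun h => hu2 (h ▸ hx)))
  have hf2 : G.Forced ({w1, w2} : Set V)ᶜ w2 := by
    rcases hsec with hadj | ⟨v, hv, hvw1⟩
    · refine SimpleGraph.Forced.force hf1 hadj ?_
      intro x hx hxw2
      exact SimpleGraph.Forced.init (hmem x (G.ne_of_adj (G.adj_symm hx)) hxw2)
    · have hvw2 : v ≠ w2 := G.ne_of_adj hv
      refine SimpleGraph.Forced.force (SimpleGraph.Forced.init (hmem v hvw1 hvw2)) hv ?_
      intro x hx hxw2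
      by_cases hxw1 : x = w1
      · exact hxw1 ▸ hf1
      · exact SimpleGraph.Forced.init (hmem x hxw1 hxw2)
  intro v
  by_cases h1 : v = w1
  · exact h1 ▸ hf1
  by_cases h2 : v = w2
  · exact h2 ▸ hf2
  exact SimpleGraph.Forced.init (hmem v h1 h2)

lemma forcing_of_small [Finite V] (G : SimpleGraph V)
    (hiso : ∀ v : V, ∃ u, G.Adj v u)
    (htwin : ¬ ∃ A B : V, A ≠ B ∧ (G.neighborSet A = G.neighborSet B ∨
      insert A (G.neighborSet A) = insert B (G.neighborSet B)))
    (W : Set V) (hW : W.ncard ≤ 2) : G.IsZeroForcing Wᶜ := by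
  have hWfin : W.Finite := Set.toFinite W
  interval_cases h : W.ncard
  · -- ncard 0 : W = ∅
    have : W = ∅ := (Set.ncard_eq_zero hWfin).1 h
    subst this
    intro v
    exact SimpleGraph.Forced.init (by simp)
  · -- ncard 1
    obtain ⟨w, rfl⟩ := Set.ncard_eq_one.1 h
    obtain ⟨u, hu⟩ := hiso w
    have huw : u ≠ w := (G.ne_of_adj hu).symm
    intro v
    by_cases hv : v = w
    · subst hv
      refine SimpleGraph.Forced.force (SimpleGraph.Forced.init (by simp [huw])) (G.adj_symm hu) ?_
      intro x hx hxw
      exact SimpleGraph.Forced.init (by simp [hxw])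
    · exact SimpleGraph.Forced.init (by simp [hv])
  · -- ncard 2
    obtain ⟨w1, w2, h12, rfl⟩ := Set.ncard_eq_two.1 h
    have hkey := htwin
    push_neg at hkey
    obtain ⟨hne1, hne2⟩ := hkey w1 w2 h12
    by_cases hadj : G.Adj w1 w2
    · -- use closed neighborhood difference
      have : ∃ u, (u ∈ insert w1 (G.neighborSet w1) ∧ u ∉ insert w2 (G.neighborSet w2)) ∨
          (u ∈ insert w2 (G.neighborSet w2) ∧ u ∉ insert w1 (G.neighborSet w1)) := by
        by_contra hc
        push_neg at hc
        apply hne2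
        ext x
        have := hc x
        exact ⟨this.1, this.2⟩
      obtain ⟨u, hu | hu⟩ := this
      · obtain ⟨hu1, hu2⟩ := hu
        have huw2 : u ≠ w2 := fun h => hu2 (h ▸ Set.mem_insert _ _)
        have huadj2 : ¬ G.Adj u w2 := fun h => hu2 (Set.mem_insert_of_mem _ (G.adj_symm h))
        have huadj1 : G.Adj u w1 := by
          rcases Set.mem_insert_iff.1 hu1 with rfl | h
          · exact absurd (Set.mem_insert_of_mem _ (G.adj_symm hadj)) hu2
          · exact G.adj_symm h
        exact pair_helper G w1 w2 h12 u huadj1 huadj2 huw2 (Or.inl hadj)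
      · obtain ⟨hu1, hu2⟩ := hu
        have huw1 : u ≠ w1 := fun h => hu2 (h ▸ Set.mem_insert _ _)
        have huadj1 : ¬ G.Adj u w1 := fun h => hu2 (Set.mem_insert_of_mem _ (G.adj_symm h))
        have huadj2 : G.Adj u w2 := by
          rcases Set.mem_insert_iff.1 hu1 with rfl | h
          · exact absurd (Set.mem_insert_of_mem _ hadj) hu2
          · exact G.adj_symm h
        have := pair_helper G w2 w1 h12.symm u huadj2 huadj1 huw1 (Or.inl (G.adj_symm hadj))
        rwa [Set.pair_comm w2 w1] at this
    · -- not adjacent: use open neighborhood difference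
      have : ∃ u, (u ∈ G.neighborSet w1 ∧ u ∉ G.neighborSet w2) ∨
          (u ∈ G.neighborSet w2 ∧ u ∉ G.neighborSet w1) := by
        by_contra hc
        push_neg at hc
        apply hne1
        ext x
        have := hc x
        exact ⟨this.1, this.2⟩
      obtain ⟨v2, hv2⟩ := hiso w2
      have hv2w1 : v2 ≠ w1 := fun h => hadj (G.adj_symm (h ▸ hv2))
      obtain ⟨v1, hv1⟩ := hiso w1
      have hv1w2 : v1 ≠ w2 := fun h => hadj (h ▸ hv1)
      obtain ⟨u, hu | hu⟩ := this
      · obtain ⟨hu1, hu2⟩ := hu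
        have huw2 : u ≠ w2 := fun h => hadj (h ▸ hu1)
        exact pair_helper G w1 w2 h12 u (G.adj_symm hu1) (fun h => hu2 (G.adj_symm h)) huw2
          (Or.inr ⟨v2, G.adj_symm hv2, hv2w1⟩)
      · obtain ⟨hu1, hu2⟩ := hu
        have huw1 : u ≠ w1 := fun h => hadj (G.adj_symm (h ▸ hu1))
        have := pair_helper G w2 w1 h12.symm u (G.adj_symm hu1) (fun h => hu2 (G.adj_symm h)) huw1
          (Or.inr ⟨v1, G.adj_symm hv1, hv1w2⟩)
        rwa [Set.pair_comm w2 w1] at this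

theorem stmt9 (n k a : ℕ) (hak : a + 2 ≤ k) (hn : 2 * k ≤ n + a)
    (hne : ¬ (n = 2 * k ∧ a = 0)) :
    (∀ A : {s : Finset (Fin n) // s.card = k}, ∃ B, (genKneser n k a).Adj A B) ∧
    (¬ ∃ A B : {s : Finset (Fin n) // s.card = k}, A ≠ B ∧
      ((genKneser n k a).neighborSet A = (genKneser n k a).neighborSet B ∨
        insert A ((genKneser n k a).neighborSet A) =
          insert B ((genKneser n k a).neighborSet B))) ∧
    3 ≤ (genKneser n k a).zeroBlockingNumber := by
  classical
  have hkn : k + 2 ≤ n := by omega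
  -- Part 1: no isolated vertices
  have part1 : ∀ A : {s : Finset (Fin n) // s.card = k}, ∃ B, (genKneser n k a).Adj A B := by
    intro ⟨A, hA⟩
    obtain ⟨P, hPsub, hPcard⟩ := Finset.exists_subset_card_eq (show a ≤ A.card by omega)
    have hcA : (Aᶜ).card = n - k := by rw [Finset.card_compl, Fintype.card_fin, hA]
    obtain ⟨Q, hQsub, hQcard⟩ := Finset.exists_subset_card_eq
      (show k - a ≤ (Aᶜ).card by omega)
    have hdisj : Disjoint P Q := Finset.disjoint_left.2 fun x hx hx' =>
      (Finset.mem_compl.1 (hQsub hx')) (hPsub hx)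
    have hCcard : (P ∪ Q).card = k := by
      rw [Finset.card_union_of_disjoint hdisj, hPcard, hQcard]; omega
    have hint : (P ∪ Q) ∩ A ⊆ P := by
      intro x hx
      obtain ⟨hx1, hx2⟩ := Finset.mem_inter.1 hx
      rcases Finset.mem_union.1 hx1 with h | h
      · exact h
      · exact absurd hx2 (Finset.mem_compl.1 (hQsub h))
    have hia : ((P ∪ Q) ∩ A).card ≤ a := hPcard ▸ Finset.card_le_card hint
    refine ⟨⟨P ∪ Q, hCcard⟩, (show _ ∧ _ from ⟨?_, ?_⟩)⟩
    · intro h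
      have hAeq : A = P ∪ Q := congrArg Subtype.val h
      have : ((P ∪ Q) ∩ A).card = k := by rw [← hAeq, Finset.inter_self, hA]
      omega
    · show (A ∩ (P ∪ Q)).card ≤ a
      rw [Finset.inter_comm]
      exact hia
  -- Part 2: no twins
  have part2 : ¬ ∃ A B : {s : Finset (Fin n) // s.card = k}, A ≠ B ∧
      ((genKneser n k a).neighborSet A = (genKneser n k a).neighborSet B ∨
        insert A ((genKneser n k a).neighborSet A) =
          insert B ((genKneser n k a).neighborSet B)) := by
    rintro ⟨A, B, hAB, hcase⟩
    have hABv : (A : Finset (Fin n)) ≠ (B : Finset (Fin n)) :=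
      fun h => hAB (Subtype.ext h)
    obtain ⟨C, hCk, hCA, hCB, hCneB⟩ :=
      kneser_dist n k a hak hn hne A.1 B.1 A.2 B.2 hABv
    set Cv : {s : Finset (Fin n) // s.card = k} := ⟨C, hCk⟩ with hCv
    have hCneA : Cv ≠ A := by
      intro h
      have : (C ∩ A.1).card = k := by
        rw [show C = A.1 from congrArg Subtype.val h, Finset.inter_self, A.2]
      omega
    have hCneB' : Cv ≠ B := fun h => hCneB (congrArg Subtype.val h)
    have hadjA : (genKneser n k a).Adj Cv A := (show _ ∧ _ from ⟨hCneA, hCA⟩)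
    have hnadjB : ¬ (genKneser n k a).Adj Cv B := fun h => by
      have h2 : (C ∩ (B : Finset (Fin n))).card ≤ a := (show _ ∧ _ from h).2
      omega
    rcases hcase with hEq | hEq
    · -- open twins: first rule out A adjacent B
      by_cases hadjAB : (genKneser n k a).Adj A B
      · have h1 : B ∈ (genKneser n k a).neighborSet A := hadjAB
        rw [hEq] at h1
        exact ((genKneser n k a).loopless.irrefl B) h1
      · have h1 : Cv ∈ (genKneser n k a).neighborSet A := (genKneser n k a).adj_symm hadjA
        rw [hEq] at h1
        exact hnadjB ((genKneser n k a).adj_symm h1)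
    · have h1 : Cv ∈ insert A ((genKneser n k a).neighborSet A) :=
        Set.mem_insert_of_mem _ ((genKneser n k a).adj_symm hadjA)
      rw [hEq] at h1
      rcases Set.mem_insert_iff.1 h1 with h | h
      · exact hCneB' h
      · exact hnadjB ((genKneser n k a).adj_symm h)
  refine ⟨part1, part2, ?_⟩
  -- Part 3
  have hVne : Nonempty {s : Finset (Fin n) // s.card = k} := by
    obtain ⟨s, _, hs⟩ := Finset.exists_subset_card_eq
      (show k ≤ (Finset.univ : Finset (Fin n)).card by simp; omega)
    exact ⟨⟨s, hs⟩⟩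
  have hSne : {m | ∃ W : Set {s : Finset (Fin n) // s.card = k},
      (genKneser n k a).IsZeroBlocking W ∧ W.ncard = m}.Nonempty := by
    refine ⟨(Set.univ : Set {s : Finset (Fin n) // s.card = k}).ncard, Set.univ, ?_, rfl⟩
    intro hforce
    obtain ⟨v⟩ := hVne
    have := hforce v
    rw [Set.compl_univ] at this
    induction this with
    | init h => exact h
    | force _ _ _ ih _ => exact ih
  refine le_csInf hSne ?_
  rintro m ⟨W, hWblock, rfl⟩
  by_contra hlt
  exact hWblock (forcing_of_small (genKneser n k a) part1 part2 W (by omega))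
end

section
/- If m is a positive integer with n ≥ mk and k + 1 ≤ (a+1)(m-1), then any family of m pairwise disjoint k-subsets of [n] is a zero blocking set of the generalized Kneser graph K(n,k,a); hence B(K(n,k,a)) ≤ m. -/
theorem stmt10 (n k a m : ℕ) (hm : 1 ≤ m) (hn : m * k ≤ n)
    (hk : k + 1 ≤ (a + 1) * (m - 1))
    (W : Finset {s : Finset (Fin n) // s.card = k}) (hcard : W.card = m)
    (hdisj : ∀ A ∈ W, ∀ B ∈ W, A ≠ B →
      Disjoint (A : Finset (Fin n)) (B : Finset (Fin n))) :
    (genKneser n k a).IsZeroBlocking (W : Set {s : Finset (Fin n) // s.card = k}) ∧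
    (genKneser n k a).zeroBlockingNumber ≤ m := by
  classical
  have key : ∀ u : {s : Finset (Fin n) // s.card = k}, u ∉ W →
      ∀ w ∈ W, (genKneser n k a).Adj u w →
      ∃ x, x ∈ W ∧ x ≠ w ∧ (genKneser n k a).Adj u x := by
    intro u hu w hw _
    by_contra h
    push_neg at h
    have hbig : ∀ B ∈ W.erase w, a + 1 ≤ ((u : Finset (Fin n)) ∩ (B : Finset (Fin n))).card := by
      intro B hB
      obtain ⟨hBw, hBW⟩ := Finset.mem_erase.mp hB
      by_contra hle
      push_neg at hle
      exact (h B hBW hBw) (And.intro (fun e => hu (by rw [e]; exact hBW)) (Nat.lt_succ_iff.mp hle))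
    have hsum_le : ∑ B ∈ W, ((u : Finset (Fin n)) ∩ (B : Finset (Fin n))).card ≤ k := by
      rw [← Finset.card_biUnion]
      · calc (W.biUnion fun B => (u : Finset (Fin n)) ∩ (B : Finset (Fin n))).card
            ≤ (u : Finset (Fin n)).card :=
              Finset.card_le_card (Finset.biUnion_subset.mpr fun B _ => Finset.inter_subset_left)
          _ = k := u.2
      · intro A hA B hB hAB
        exact (hdisj A hA B hB hAB).mono Finset.inter_subset_right Finset.inter_subset_right
    have hsum_ge : (m - 1) * (a + 1) ≤
        ∑ B ∈ W.erase w, ((u : Finset (Fin n)) ∩ (B : Finset (Fin n))).card := by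
      have := Finset.card_nsmul_le_sum (W.erase w)
        (fun B => ((u : Finset (Fin n)) ∩ (B : Finset (Fin n))).card) (a + 1) hbig
      rwa [smul_eq_mul, Finset.card_erase_of_mem hw, hcard] at this
    have hmono : ∑ B ∈ W.erase w, ((u : Finset (Fin n)) ∩ (B : Finset (Fin n))).card ≤
        ∑ B ∈ W, ((u : Finset (Fin n)) ∩ (B : Finset (Fin n))).card :=
      Finset.sum_le_sum_of_subset (Finset.erase_subset _ _)
    have : (a + 1) * (m - 1) = (m - 1) * (a + 1) := Nat.mul_comm _ _
    omega
  have notW : ∀ v, (genKneser n k a).Forced (↑W : Set _)ᶜ v → v ∉ W := by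
    intro v hv
    induction hv with
    | init h => exact fun hW => h (Finset.mem_coe.mpr hW)
    | @force u w hu hadj hall ihu ihall =>
      intro hwW
      obtain ⟨x, hxW, hxw, hadjx⟩ := key u ihu w hwW hadj
      exact ihall x hadjx hxw hxW
  have hW0 : W.Nonempty := Finset.card_pos.mp (by omega)
  obtain ⟨v0, hv0⟩ := hW0
  have hblock : (genKneser n k a).IsZeroBlocking (↑W : Set _) :=
    fun hZF => notW v0 (hZF v0) hv0
  exact ⟨hblock, Nat.sInf_le ⟨↑W, hblock, by simp [Set.ncard_coe_finset, hcard]⟩⟩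
end

section
/- If n ≥ 2k - a, k - 2 ≥ a ≥ 0, and (n,a) ≠ (2k,0), then B(K(n,k,a)) ≥ ⌈(k-a)/(a+1)⌉ + 2. -/
open Finset

section Helpers

variable {n : ℕ}

private lemma pigeonF {C B F : Finset (Finset (Fin n))}
    (h1 : ∀ u ∈ C, u ∈ F → u ∈ B) (h2 : B.card < C.card) : ∃ u ∈ C, u ∉ F := by
  by_contra h
  push_neg at h
  exact absurd (Finset.card_le_card (fun u hu => h1 u hu (h u hu))) (Nat.not_le.mpr h2)

private lemma inter_w {S R w : Finset (Fin n)} (hS : S ⊆ w) (hR : ∀ e ∈ R, e ∉ w) :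
    (S ∪ R) ∩ w = S := by
  ext e
  simp only [mem_inter, mem_union]
  constructor
  · rintro ⟨h1 | h1, h2⟩
    · exact h1
    · exact absurd h2 (hR e h1)
  · intro h
    exact ⟨Or.inl h, hS h⟩

private lemma card_union_w {S R w : Finset (Fin n)} (hS : S ⊆ w) (hR : ∀ e ∈ R, e ∉ w) :
    (S ∪ R).card = S.card + R.card :=
  Finset.card_union_of_disjoint (Finset.disjoint_left.mpr fun e heS heR => hR e heR (hS heS))

/-- The key combinatorial lemma: given a small white family `F` of `k`-sets and a
member `w`, there is a `k`-set `u` outside `F` adjacent to `w` (intersection ≤ a)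
and non-adjacent to every other member of `F` (intersection ≥ a+1). -/
private lemma exists_forcer {n k a : ℕ} (hn : 2 * k ≤ n + a) (hak : a + 2 ≤ k)
    (hne : ¬(n = 2 * k ∧ a = 0)) (F : Finset (Finset (Fin n)))
    (hFc : F.card ≤ k / (a + 1) + 1) (hFk : ∀ x ∈ F, x.card = k)
    {w : Finset (Fin n)} (hw : w ∈ F) :
    ∃ u : Finset (Fin n), u.card = k ∧ (u ∩ w).card ≤ a ∧ u ∉ F ∧
      ∀ x ∈ F, x ≠ w → a + 1 ≤ (u ∩ x).card := by
  classical
  have hwk : w.card = k := hFk w hw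
  have hnpos : 0 < n := by omega
  set t := k / (a + 1) with htdef
  have ht1 : (a + 1) * t ≤ k := by rw [htdef]; exact Nat.mul_div_le k (a + 1)
  have ht3 : 1 ≤ t := by
    rw [htdef]; exact (Nat.one_le_div_iff (by omega)).mpr (by omega)
  have ht2 : t + a ≤ k := by
    have hlt : t < (k - a) + 1 := by
      rw [htdef, Nat.div_lt_iff_lt_mul (show 0 < a + 1 by omega)]
      have hb : k - a + a = k := by omega
      nlinarith [Nat.zero_le ((k - a) * a)]
    omega
  set G := F.erase w with hGdef
  have hGcard : G.card + 1 = F.card := Finset.card_erase_add_one hw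
  have hGs : G.card ≤ t := by omega
  have hGF : ∀ x ∈ G, x ∈ F := fun x hx => Finset.mem_of_mem_erase hx
  have hGne : ∀ x ∈ G, x ≠ w := fun x hx => Finset.ne_of_mem_erase hx
  have hGk : ∀ x ∈ G, x.card = k := fun x hx => hFk x (hGF x hx)
  have hGd : ∀ x ∈ G, 1 ≤ (x \ w).card := by
    intro x hx
    rw [Nat.one_le_iff_ne_zero, Ne, Finset.card_eq_zero, Finset.sdiff_eq_empty_iff_subset]
    intro hsub
    exact hGne x hx (Finset.eq_of_subset_of_card_le hsub (by rw [hwk, hGk x hx]))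
  have hmemG : ∀ x ∈ F, x ≠ w → x ∈ G := fun x hx hxw => Finset.mem_erase.mpr ⟨hxw, hx⟩
  -- pick an element of x \ w
  set pick : Finset (Fin n) → Fin n :=
    fun x => if h : (x \ w).Nonempty then h.choose else ⟨0, hnpos⟩ with hpickdef
  have hpick : ∀ x ∈ G, pick x ∈ x \ w := by
    intro x hx
    have hne' : (x \ w).Nonempty := Finset.card_pos.mp (hGd x hx)
    rw [hpickdef]
    simp only [dif_pos hne']
    exact hne'.choose_spec
  rcases Nat.eq_zero_or_pos a with ha0 | ha1
  · -- CASE a = 0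
    subst ha0
    have ht0 : t = k := by simp [htdef]
    have hn1 : 2 * k + 1 ≤ n := by
      rcases Nat.lt_or_ge (2 * k) n with h | h
      · omega
      · exact absurd ⟨by omega, rfl⟩ hne
    -- P = complement of w
    set P : Finset (Fin n) := Finset.univ \ w with hPdef
    have hPcard : P.card = n - k := by
      rw [hPdef, Finset.card_sdiff_of_subset (Finset.subset_univ w), Finset.card_univ,
        Fintype.card_fin, hwk]
    have hPW : ∀ e ∈ P, e ∉ w := by
      intro e he
      rw [hPdef, Finset.mem_sdiff] at he
      exact he.2
    have hsubP : ∀ u : Finset (Fin n), u ⊆ P → (u ∩ w).card = 0 := by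
      intro u hu
      rw [Finset.card_eq_zero, Finset.eq_empty_iff_forall_notMem]
      intro e he
      rw [Finset.mem_inter] at he
      exact hPW e (hu he.1) he.2
    have hPne : ∀ u : Finset (Fin n), u ⊆ P → u.card = k → u ≠ w := by
      intro u hu huc hequ
      have : (u ∩ w).card = 0 := hsubP u hu
      rw [hequ, Finset.inter_self, hwk] at this
      omega
    have hsdiffP : ∀ x ∈ G, x \ w ⊆ P := by
      intro x hx e he
      rw [Finset.mem_sdiff] at he
      rw [hPdef, Finset.mem_sdiff]
      exact ⟨Finset.mem_univ e, he.2⟩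
    by_cases hbig : 3 * k ≤ n
    · -- α : lots of room
      -- helper: any hitting set of size ≤ k-1 works
      have key : ∀ H : Finset (Fin n), H ⊆ P → H.card ≤ k - 1 →
          (∀ x ∈ G, ((H ∩ x).Nonempty)) →
          ∃ u : Finset (Fin n), u.card = k ∧ (u ∩ w).card ≤ 0 ∧ u ∉ F ∧
            ∀ x ∈ F, x ≠ w → 0 + 1 ≤ (u ∩ x).card := by
        intro H hHP hHc hHhit
        have hpool : k - 1 - H.card ≤ (P \ H).card := by
          rw [Finset.card_sdiff_of_subset hHP, hPcard]
          omega
        obtain ⟨O, hOsub, hOcard⟩ := Finset.exists_subset_card_eq hpool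
        have hOP : O ⊆ P := hOsub.trans Finset.sdiff_subset
        set u' := H ∪ O with hu'def
        have hu'P : u' ⊆ P := Finset.union_subset hHP hOP
        have hu'card : u'.card = k - 1 := by
          rw [hu'def, Finset.card_union_of_disjoint, hOcard]
          · omega
          · rw [Finset.disjoint_right]
            intro e he
            exact (Finset.mem_sdiff.mp (hOsub he)).2
        set C := (P \ u').image (fun e => insert e u') with hCdef
        have hCvalid : ∀ u ∈ C, u.card = k ∧ u ⊆ P ∧
            (∀ x ∈ F, x ≠ w → 1 ≤ (u ∩ x).card) := by
          intro u hu
          rw [hCdef, Finset.mem_image] at hu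
          obtain ⟨e, he, rfl⟩ := hu
          rw [Finset.mem_sdiff] at he
          refine ⟨?_, ?_, ?_⟩
          · rw [Finset.card_insert_of_notMem he.2, hu'card]
            omega
          · exact Finset.insert_subset he.1 hu'P
          · intro x hx hxw
            obtain ⟨e', he'⟩ := hHhit x (hmemG x hx hxw)
            rw [Finset.mem_inter] at he'
            refine Finset.card_pos.mpr ⟨e', Finset.mem_inter.mpr ⟨?_, he'.2⟩⟩
            exact Finset.mem_insert_of_mem (Finset.mem_union_left _ he'.1)
        have hCcard : C.card = n - k - (k - 1) := by
          rw [hCdef, Finset.card_image_of_injOn, Finset.card_sdiff_of_subset hu'P, hPcard, hu'card]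
          intro e1 he1 e2 he2 heq
          dsimp only at heq
          have he1' := (Finset.mem_sdiff.mp he1).2
          have : e1 ∈ insert e2 u' := heq ▸ Finset.mem_insert_self e1 u'
          rcases Finset.mem_insert.mp this with h | h
          · exact h
          · exact absurd h he1'
        have hbad : ∀ u ∈ C, u ∈ F → u ∈ G := by
          intro u huC huF
          obtain ⟨hcard, hsub, _⟩ := hCvalid u huC
          exact hmemG u huF (hPne u hsub hcard)
        have hcnt : G.card < C.card := by
          rw [hCcard]
          omega
        obtain ⟨u, huC, huF⟩ := pigeonF hbad hcnt
        obtain ⟨hcard, hsub, hcov⟩ := hCvalid u huC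
        exact ⟨u, hcard, le_of_eq (hsubP u hsub), huF, hcov⟩
      set FT := G.image pick with hFTdef
      have hFTP : FT ⊆ P := by
        intro e he
        rw [hFTdef, Finset.mem_image] at he
        obtain ⟨x, hx, rfl⟩ := he
        exact hsdiffP x hx (hpick x hx)
      have hFThit : ∀ x ∈ G, ((FT ∩ x).Nonempty) := by
        intro x hx
        exact ⟨pick x, Finset.mem_inter.mpr ⟨Finset.mem_image_of_mem pick hx,
          (Finset.mem_sdiff.mp (hpick x hx)).1⟩⟩
      have hFTle : FT.card ≤ G.card := Finset.card_image_le
      by_cases hFTc : FT.card ≤ k - 1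
      · exact key FT hFTP hFTc hFThit
      · -- FT.card = k, G.card = k
        have hFTk : FT.card = k := by omega
        have hGk' : G.card = k := by omega
        by_cases hov : ∃ x ∈ G, ∃ x' ∈ G, x ≠ x' ∧ ((x ∩ x') \ w).Nonempty
        · obtain ⟨x, hx, x', hx', hxx, y, hy⟩ := hov
          rw [Finset.mem_sdiff, Finset.mem_inter] at hy
          set H := insert y (((G.erase x).erase x').image pick) with hHdef
          have hHP : H ⊆ P := by
            rw [hHdef]
            refine Finset.insert_subset ?_ ?_
            · rw [hPdef, Finset.mem_sdiff]; exact ⟨Finset.mem_univ y, hy.2⟩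
            · intro e he
              rw [Finset.mem_image] at he
              obtain ⟨z, hz, rfl⟩ := he
              have hzG : z ∈ G := Finset.mem_of_mem_erase (Finset.mem_of_mem_erase hz)
              exact hsdiffP z hzG (hpick z hzG)
          have hHc : H.card ≤ k - 1 := by
            rw [hHdef]
            have h1 : (((G.erase x).erase x').image pick).card ≤ k - 2 := by
              have : ((G.erase x).erase x').card = k - 2 := by
                have hx'e : x' ∈ G.erase x := Finset.mem_erase.mpr ⟨Ne.symm hxx, hx'⟩
                rw [Finset.card_erase_of_mem hx'e, Finset.card_erase_of_mem hx, hGk']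
                omega
              calc (((G.erase x).erase x').image pick).card
                  ≤ ((G.erase x).erase x').card := Finset.card_image_le
                _ = k - 2 := this
            calc (insert y (((G.erase x).erase x').image pick)).card
                ≤ (((G.erase x).erase x').image pick).card + 1 := Finset.card_insert_le _ _
              _ ≤ k - 1 := by omega
          have hHhit : ∀ z ∈ G, ((H ∩ z).Nonempty) := by
            intro z hz
            by_cases hzx : z = x
            · exact ⟨y, Finset.mem_inter.mpr ⟨Finset.mem_insert_self y _, hzx ▸ hy.1.1⟩⟩
            by_cases hzx' : z = x'
            · exact ⟨y, Finset.mem_inter.mpr ⟨Finset.mem_insert_self y _, hzx' ▸ hy.1.2⟩⟩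
            have hzmem : z ∈ (G.erase x).erase x' :=
              Finset.mem_erase.mpr ⟨hzx', Finset.mem_erase.mpr ⟨hzx, hz⟩⟩
            exact ⟨pick z, Finset.mem_inter.mpr ⟨Finset.mem_insert_of_mem
              (Finset.mem_image_of_mem pick hzmem), (Finset.mem_sdiff.mp (hpick z hz)).1⟩⟩
          exact key H hHP hHc hHhit
        · -- pairwise disjoint outside w: FT itself works
          push_neg at hov
          refine ⟨FT, hFTk, le_of_eq (hsubP FT hFTP), ?_, ?_⟩
          · intro hFTF
            have hFTG : FT ∈ G := hmemG FT hFTF (hPne FT hFTP hFTk)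
            have h2 : 1 < G.card := by omega
            obtain ⟨x', hx', hx'ne⟩ := Finset.exists_mem_ne h2 FT
            have h3 : ((FT ∩ x') \ w).Nonempty := by
              refine ⟨pick x', ?_⟩
              rw [Finset.mem_sdiff, Finset.mem_inter]
              have := Finset.mem_sdiff.mp (hpick x' hx')
              exact ⟨⟨Finset.mem_image_of_mem pick hx', this.1⟩, this.2⟩
            exact h3.ne_empty (hov FT hFTG x' hx' (Ne.symm hx'ne))
          · intro x hx hxw
            obtain ⟨e, he⟩ := hFThit x (hmemG x hx hxw)
            exact Finset.card_pos.mpr ⟨e, he⟩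
    · -- β : n ≤ 3k - 1
      push_neg at hbig
      set Small := G.filter (fun x => (x \ w).card ≤ n - 2 * k) with hSmalldef
      set B0 := Small.image pick with hB0def
      have hB0card : B0.card ≤ Small.card := Finset.card_image_le
      have hB0P : B0 ⊆ P := by
        intro e he
        rw [hB0def, Finset.mem_image] at he
        obtain ⟨x, hx, rfl⟩ := he
        exact hsdiffP x (Finset.mem_of_mem_filter x hx) (hpick x (Finset.mem_of_mem_filter x hx))
      have hScard : Small.card ≤ G.card := Finset.card_filter_le _ _
      have hQbig : k - B0.card + 1 ≤ (P \ B0).card := by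
        rw [Finset.card_sdiff_of_subset hB0P, hPcard]
        omega
      obtain ⟨Q', hQ'sub, hQ'card⟩ := Finset.exists_subset_card_eq hQbig
      have hQ'P : Q' ⊆ P := hQ'sub.trans (Finset.sdiff_subset)
      have hQ'B0 : ∀ e ∈ Q', e ∉ B0 := by
        intro e he
        have := hQ'sub he
        rw [Finset.mem_sdiff] at this
        exact this.2
      set C := Q'.image (fun q => B0 ∪ Q'.erase q) with hCdef
      have hCmem : ∀ u ∈ C, ∃ q ∈ Q', u = B0 ∪ Q'.erase q := by
        intro u hu
        rw [hCdef, Finset.mem_image] at hu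
        obtain ⟨q, hq, rfl⟩ := hu
        exact ⟨q, hq, rfl⟩
      have hCvalid : ∀ u ∈ C, u.card = k ∧ u ⊆ P ∧
          (∀ x ∈ F, x ≠ w → 1 ≤ (u ∩ x).card) := by
        intro u hu
        obtain ⟨q, hq, rfl⟩ := hCmem u hu
        have hdisj : Disjoint B0 (Q'.erase q) := by
          rw [Finset.disjoint_right]
          intro e he
          exact hQ'B0 e (Finset.mem_of_mem_erase he)
        have hcard : (B0 ∪ Q'.erase q).card = k := by
          rw [Finset.card_union_of_disjoint hdisj, Finset.card_erase_of_mem hq, hQ'card]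
          omega
        have hsub : B0 ∪ Q'.erase q ⊆ P :=
          Finset.union_subset hB0P (((Finset.erase_subset _ _)).trans hQ'P)
        refine ⟨hcard, hsub, ?_⟩
        intro x hx hxw
        have hxG : x ∈ G := hmemG x hx hxw
        rw [Nat.one_le_iff_ne_zero, Ne, Finset.card_eq_zero, ← Finset.not_nonempty_iff_eq_empty,
          not_not]
        by_cases hxs : x ∈ Small
        · refine ⟨pick x, Finset.mem_inter.mpr ⟨?_, ?_⟩⟩
          · exact Finset.mem_union_left _ (Finset.mem_image_of_mem pick hxs)
          · exact (Finset.mem_sdiff.mp (hpick x hxG)).1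
        · -- x is large: automatic intersection
          have hxl : n - 2 * k + 1 ≤ (x \ w).card := by
            rw [hSmalldef, Finset.mem_filter] at hxs
            push_neg at hxs
            exact hxs hxG
          have hun : ((B0 ∪ Q'.erase q) ∪ (x \ w)).card ≤ n - k := by
            rw [← hPcard]
            exact Finset.card_le_card (Finset.union_subset hsub (hsdiffP x hxG))
          have := Finset.card_union_add_card_inter (B0 ∪ Q'.erase q) (x \ w)
          have hint : 1 ≤ ((B0 ∪ Q'.erase q) ∩ (x \ w)).card := by omega
          obtain ⟨e, he⟩ := Finset.card_pos.mp hint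
          rw [Finset.mem_inter, Finset.mem_sdiff] at he
          exact ⟨e, Finset.mem_inter.mpr ⟨he.1, he.2.1⟩⟩
      have hCcard : C.card = k - B0.card + 1 := by
        rw [hCdef, Finset.card_image_of_injOn, hQ'card]
        intro q1 hq1 q2 hq2 heq
        by_contra hne'
        dsimp only at heq
        have h2 : q2 ∈ B0 ∪ Q'.erase q1 :=
          Finset.mem_union_right _ (Finset.mem_erase.mpr ⟨fun h => hne' h.symm, hq2⟩)
        rw [heq, Finset.mem_union] at h2
        rcases h2 with h | h
        · exact hQ'B0 q2 hq2 h
        · exact (Finset.mem_erase.mp h).1 rfl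
      -- bad sets are the large ones
      have hbad : ∀ u ∈ C, u ∈ F → u ∈ G \ Small := by
        intro u huC huF
        obtain ⟨hcard, hsub, _⟩ := hCvalid u huC
        have hune : u ≠ w := hPne u hsub hcard
        have huG : u ∈ G := hmemG u huF hune
        rw [Finset.mem_sdiff]
        refine ⟨huG, ?_⟩
        intro hmem
        rw [hSmalldef, Finset.mem_filter] at hmem
        have heq : u \ w = u := by
          rw [Finset.sdiff_eq_self_iff_disjoint, Finset.disjoint_right]
          intro e hew heu
          exact hPW e (hsub heu) hew
        rw [heq, hcard] at hmem
        omega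
      have hcnt : (G \ Small).card < C.card := by
        have h1 : (G \ Small).card = G.card - Small.card :=
          Finset.card_sdiff_of_subset (Finset.filter_subset _ _)
        rw [hCcard, h1]
        omega
      obtain ⟨u, huC, huF⟩ := pigeonF hbad hcnt
      obtain ⟨hcard, hsub, hcov⟩ := hCvalid u huC
      exact ⟨u, hcard, le_of_eq (hsubP u hsub), huF, fun x hx hxw => hcov x hx hxw⟩
  · -- CASE a ≥ 1
    have ht2' : t + a + 1 ≤ k := by
      have hb2 : 2 ≤ k - a := by omega
      have hlt : t < k - a := by
        rw [htdef, Nat.div_lt_iff_lt_mul (show 0 < a + 1 by omega)]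
        have hb : k - a + a = k := by omega
        nlinarith [hb2, ha1]
      omega
    set Close := G.filter (fun x => (x \ w).card ≤ a) with hClosedef
    set Far := G.filter (fun x => ¬ (x \ w).card ≤ a) with hFardef
    have hCF : Close.card + Far.card = G.card :=
      Finset.card_filter_add_card_filter_not (fun x => (x \ w).card ≤ a)
    have hFarG : ∀ x ∈ Far, x ∈ G := fun x hx => Finset.mem_of_mem_filter x hx
    have hCloseG : ∀ x ∈ Close, x ∈ G := fun x hx => Finset.mem_of_mem_filter x hx
    have hFarmem : ∀ x ∈ Far, a + 1 ≤ (x \ w).card := by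
      intro x hx
      have := (Finset.mem_filter.mp hx).2
      omega
    have hClosemem : ∀ x ∈ Close, (x \ w).card ≤ a := fun x hx => (Finset.mem_filter.mp hx).2
    have hGsplit : ∀ x ∈ G, x ∈ Close ∨ x ∈ Far := by
      intro x hx
      by_cases h : (x \ w).card ≤ a
      · exact Or.inl (Finset.mem_filter.mpr ⟨hx, h⟩)
      · exact Or.inr (Finset.mem_filter.mpr ⟨hx, h⟩)
    -- the (a+1)-element pieces of far sets
    set T : Finset (Fin n) → Finset (Fin n) := fun x =>
      if h : a + 1 ≤ (x \ w).card then (Finset.exists_subset_card_eq h).choose else ∅ with hTdef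
    have hT : ∀ x ∈ Far, T x ⊆ x \ w ∧ (T x).card = a + 1 := by
      intro x hx
      have h := hFarmem x hx
      rw [hTdef]
      simp only [dif_pos h]
      exact ⟨(Finset.exists_subset_card_eq h).choose_spec.1,
        (Finset.exists_subset_card_eq h).choose_spec.2⟩
    set FT := Far.biUnion T with hFTdef
    have hFTcard : FT.card ≤ Far.card * (a + 1) :=
      Finset.card_biUnion_le_card_mul _ _ _ (fun x hx => le_of_eq (hT x hx).2)
    have hFTw : ∀ e ∈ FT, e ∉ w := by
      intro e he
      rw [hFTdef, Finset.mem_biUnion] at he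
      obtain ⟨x, hx, hex⟩ := he
      exact (Finset.mem_sdiff.mp ((hT x hx).1 hex)).2
    have hFTsub : ∀ x ∈ Far, T x ⊆ FT := by
      intro x hx e he
      rw [hFTdef, Finset.mem_biUnion]
      exact ⟨x, hx, he⟩
    set CO := Close.biUnion (fun x => x \ w) with hCOdef
    have hCOcard : CO.card ≤ ∑ x ∈ Close, (x \ w).card := Finset.card_biUnion_le
    have hCOw : ∀ e ∈ CO, e ∉ w := by
      intro e he
      rw [hCOdef, Finset.mem_biUnion] at he
      obtain ⟨x, hx, hex⟩ := he
      exact (Finset.mem_sdiff.mp hex).2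
    have hCOsub : ∀ x ∈ Close, x \ w ⊆ CO := by
      intro x hx e he
      rw [hCOdef, Finset.mem_biUnion]
      exact ⟨x, hx, he⟩
    -- the common core of close sets inside w
    set core := w.filter (fun e => ∀ x ∈ Close, e ∈ x) with hcoredef
    have hcorew : core ⊆ w := Finset.filter_subset _ _
    have hcorex : ∀ e ∈ core, ∀ x ∈ Close, e ∈ x := fun e he => (Finset.mem_filter.mp he).2
    have hcorecard : k ≤ core.card + ∑ x ∈ Close, (x \ w).card := by
      have hwcore : w \ core ⊆ Close.biUnion (fun x => w \ x) := by
        intro e he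
        rw [Finset.mem_sdiff] at he
        have : ¬ (∀ x ∈ Close, e ∈ x) := by
          intro hall
          exact he.2 (Finset.mem_filter.mpr ⟨he.1, hall⟩)
        push_neg at this
        obtain ⟨x, hx, hex⟩ := this
        rw [Finset.mem_biUnion]
        exact ⟨x, hx, Finset.mem_sdiff.mpr ⟨he.1, hex⟩⟩
      have h1 : (w \ core).card ≤ ∑ x ∈ Close, (w \ x).card :=
        le_trans (Finset.card_le_card hwcore) Finset.card_biUnion_le
      have h2 : ∑ x ∈ Close, (w \ x).card = ∑ x ∈ Close, (x \ w).card := by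
        refine Finset.sum_congr rfl ?_
        intro x hx
        exact Finset.card_sdiff_comm (by rw [hwk, hGk x (hCloseG x hx)])
      have h3 : (w \ core).card = k - core.card := by
        rw [Finset.card_sdiff_of_subset hcorew, hwk]
      have h4 : core.card ≤ k := hwk ▸ Finset.card_le_card hcorew
      omega
    have hsum_cf : (a + 1) * (Close.card + Far.card) ≤ k := by
      calc (a + 1) * (Close.card + Far.card) ≤ (a + 1) * t := by
            apply Nat.mul_le_mul_left
            omega
        _ ≤ k := ht1
    have hexp : (a + 1) * (Close.card + Far.card)
        = a * Close.card + Close.card + (a * Far.card + Far.card) := by ring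
    by_cases hd1 : ∃ x ∈ Close, (x \ w).card = 1
    · -- Branch (i) : some close set at distance 1
      obtain ⟨xm, hxm, hxm1⟩ := hd1
      have hCpos : 1 ≤ Close.card := Finset.card_pos.mpr ⟨xm, hxm⟩
      have hSig : ∑ x ∈ Close, (x \ w).card ≤ 1 + a * (Close.card - 1) := by
        rw [← Finset.add_sum_erase _ _ hxm, hxm1]
        have hsum := Finset.sum_le_card_nsmul (Close.erase xm) (fun x => (x \ w).card) a
          (fun x hx => hClosemem x (Finset.mem_of_mem_erase hx))
        rw [Finset.card_erase_of_mem hxm, smul_eq_mul] at hsum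
        have : (Close.card - 1) * a = a * (Close.card - 1) := by ring
        omega
      have hprod : a * Close.card = a * (Close.card - 1) + a := by
        have h' : Close.card - 1 + 1 = Close.card := by omega
        calc a * Close.card = a * (Close.card - 1 + 1) := by rw [h']
          _ = a * (Close.card - 1) + a := by ring
      have hka : 1 + a * Close.card + Far.card ≤ k := by
        have h0 : 0 ≤ a * Far.card := Nat.zero_le _
        omega
      have hcoreF : a + Far.card ≤ core.card := by omega
      obtain ⟨c, hcsub, hccard⟩ := Finset.exists_subset_card_eq
        (show a ≤ core.card by omega)
      obtain ⟨x₀, hx₀⟩ := Finset.card_pos.mp (show 0 < c.card by omega)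
      have hCOFT : (CO ∪ FT).card + a ≤ k := by
        have h1 : (CO ∪ FT).card ≤ CO.card + FT.card := Finset.card_union_le _ _
        have h2 : Far.card * (a + 1) = a * Far.card + Far.card := by ring
        omega
      have hCOFTw : ∀ e ∈ CO ∪ FT, e ∉ w := by
        intro e he
        rcases Finset.mem_union.mp he with h | h
        · exact hCOw e h
        · exact hFTw e h
      have hWCF : (w ∪ (CO ∪ FT)).card = k + (CO ∪ FT).card := by
        rw [Finset.card_union_of_disjoint, hwk]
        rw [Finset.disjoint_left]
        intro e hew hee
        exact hCOFTw e hee hew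
      have hpool : k - a - (CO ∪ FT).card ≤ (Finset.univ \ (w ∪ (CO ∪ FT))).card := by
        rw [Finset.card_sdiff_of_subset (Finset.subset_univ _), Finset.card_univ, Fintype.card_fin, hWCF]
        omega
      obtain ⟨O, hOsub, hOcard⟩ := Finset.exists_subset_card_eq hpool
      set R := (CO ∪ FT) ∪ O with hRdef
      have hOout : ∀ e ∈ O, e ∉ w ∪ (CO ∪ FT) := by
        intro e he
        exact (Finset.mem_sdiff.mp (hOsub he)).2
      have hRw : ∀ e ∈ R, e ∉ w := by
        intro e he
        rcases Finset.mem_union.mp he with h | h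
        · exact hCOFTw e h
        · intro hew
          exact hOout e h (Finset.mem_union_left _ hew)
      have hRcard : R.card = k - a := by
        rw [hRdef, Finset.card_union_of_disjoint, hOcard]
        · omega
        · rw [Finset.disjoint_right]
          intro e he
          intro hee
          exact hOout e he (Finset.mem_union_right _ hee)
      have hRsub : ∀ x ∈ Close, x \ w ⊆ R :=
        fun x hx => (hCOsub x hx).trans ((Finset.subset_union_left).trans Finset.subset_union_left)
      have hRsubF : ∀ x ∈ Far, T x ⊆ R :=
        fun x hx => (hFTsub x hx).trans ((Finset.subset_union_right).trans Finset.subset_union_left)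
      set C := (insert x₀ (core \ c)).image (fun e => insert e (c.erase x₀) ∪ R) with hCdef
      have hSprop : ∀ e ∈ insert x₀ (core \ c), insert e (c.erase x₀) ⊆ core ∧
          (insert e (c.erase x₀)).card = a ∧ e ∉ c.erase x₀ := by
        intro e he
        have hecore : e ∈ core ∧ e ∉ c.erase x₀ := by
          rcases Finset.mem_insert.mp he with h | h
          · subst h
            exact ⟨hcsub hx₀, Finset.notMem_erase _ _⟩
          · rw [Finset.mem_sdiff] at h
            exact ⟨h.1, fun hh => h.2 (Finset.mem_of_mem_erase hh)⟩
        refine ⟨?_, ?_, hecore.2⟩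
        · exact Finset.insert_subset hecore.1 ((Finset.erase_subset _ _).trans hcsub)
        · rw [Finset.card_insert_of_notMem hecore.2, Finset.card_erase_of_mem hx₀, hccard]
          omega
      have hCvalid : ∀ u ∈ C, u.card = k ∧ (u ∩ w).card = a ∧
          (∀ x ∈ F, x ≠ w → a + 1 ≤ (u ∩ x).card) := by
        intro u hu
        rw [hCdef, Finset.mem_image] at hu
        obtain ⟨e, he, rfl⟩ := hu
        obtain ⟨hsubcore, hScard, _⟩ := hSprop e he
        set S := insert e (c.erase x₀)
        have hSw : S ⊆ w := hsubcore.trans hcorew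
        refine ⟨?_, ?_, ?_⟩
        · rw [card_union_w hSw hRw, hScard, hRcard]
          omega
        · rw [inter_w hSw hRw, hScard]
        · intro x hx hxw
          rcases hGsplit x (hmemG x hx hxw) with hxc | hxf
          · -- close
            have hVsub : S ∪ (x \ w) ⊆ (S ∪ R) ∩ x := by
              refine Finset.subset_inter ?_ ?_
              · exact Finset.union_subset Finset.subset_union_left
                  ((hRsub x hxc).trans Finset.subset_union_right)
              · refine Finset.union_subset ?_ (Finset.sdiff_subset)
                intro e' he'
                exact hcorex e' (hsubcore he') x hxc
            have hVcard : (S ∪ (x \ w)).card = a + (x \ w).card := by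
              rw [card_union_w hSw (fun e' he' => (Finset.mem_sdiff.mp he').2), hScard]
            have hxd := hGd x (hCloseG x hxc)
            have := Finset.card_le_card hVsub
            omega
          · -- far
            have hVsub : T x ⊆ (S ∪ R) ∩ x := by
              refine Finset.subset_inter ((hRsubF x hxf).trans Finset.subset_union_right) ?_
              exact (hT x hxf).1.trans (Finset.sdiff_subset)
            have := Finset.card_le_card hVsub
            rw [(hT x hxf).2] at this
            exact this
      have hCcard : C.card = 1 + (core.card - a) := by
        rw [hCdef, Finset.card_image_of_injOn]
        · have hnm : x₀ ∉ core \ c := by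
            rw [Finset.mem_sdiff]
            intro h
            exact h.2 hx₀
          rw [Finset.card_insert_of_notMem hnm, Finset.card_sdiff_of_subset hcsub, hccard]
          omega
        · intro e1 he1 e2 he2 heq
          dsimp only at heq
          obtain ⟨hs1, _, hne1⟩ := hSprop e1 he1
          obtain ⟨hs2, _, hne2⟩ := hSprop e2 he2
          have hw1 : (insert e1 (c.erase x₀) ∪ R) ∩ w = insert e1 (c.erase x₀) :=
            inter_w (hs1.trans hcorew) hRw
          have hw2 : (insert e2 (c.erase x₀) ∪ R) ∩ w = insert e2 (c.erase x₀) :=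
            inter_w (hs2.trans hcorew) hRw
          have : insert e1 (c.erase x₀) = insert e2 (c.erase x₀) := by
            rw [← hw1, ← hw2, heq]
          have he12 : e1 ∈ insert e2 (c.erase x₀) := this ▸ Finset.mem_insert_self e1 _
          rcases Finset.mem_insert.mp he12 with h | h
          · exact h
          · exact absurd h hne1
      by_cases hcore1 : a + 1 ≤ core.card
      · -- the core is big: bad candidates must be far
        have hbad : ∀ u ∈ C, u ∈ F → u ∈ Far := by
          intro u huC huF
          obtain ⟨hcard, hintw, _⟩ := hCvalid u huC
          have hune : u ≠ w := by
            intro hequ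
            rw [hequ, Finset.inter_self, hwk] at hintw
            omega
          have huG : u ∈ G := hmemG u huF hune
          rcases hGsplit u huG with huc | huf
          · exfalso
            have hcsub' : core ⊆ u ∩ w := by
              intro e he
              exact Finset.mem_inter.mpr ⟨hcorex e he u huc, hcorew he⟩
            have := Finset.card_le_card hcsub'
            omega
          · exact huf
        have hcnt : Far.card < C.card := by
          rw [hCcard]
          omega
        obtain ⟨u, huC, huF⟩ := pigeonF hbad hcnt
        obtain ⟨hcard, hintw, hcov⟩ := hCvalid u huC
        exact ⟨u, hcard, by omega, huF, hcov⟩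
      · -- core.card = a, so Far is empty; at most one bad close candidate
        have hcoreeq : core.card = a := by omega
        have hFar0 : Far.card = 0 := by omega
        have hFarempty : ∀ x, x ∉ Far := by
          intro x hx
          have := Finset.card_pos.mpr ⟨x, hx⟩
          omega
        have hceq : c = core := Finset.eq_of_subset_of_card_le hcsub (by omega)
        -- the base candidate
        set u₀ := core ∪ R with hu₀def
        have hu₀cov : ∀ x ∈ F, x ≠ w → a + 1 ≤ (u₀ ∩ x).card := by
          intro x hx hxw
          rcases hGsplit x (hmemG x hx hxw) with hxc | hxf
          · have hVsub : core ∪ (x \ w) ⊆ u₀ ∩ x := by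
              refine Finset.subset_inter ?_ ?_
              · exact Finset.union_subset Finset.subset_union_left
                  ((hRsub x hxc).trans Finset.subset_union_right)
              · refine Finset.union_subset ?_ (Finset.sdiff_subset)
                intro e' he'
                exact hcorex e' he' x hxc
            have hVcard : (core ∪ (x \ w)).card = a + (x \ w).card := by
              rw [card_union_w hcorew (fun e' he' => (Finset.mem_sdiff.mp he').2), hcoreeq]
            have hxd := hGd x (hCloseG x hxc)
            have := Finset.card_le_card hVsub
            omega
          · exact absurd hxf (hFarempty x)
        have hu₀k : u₀.card = k := by
          rw [hu₀def, card_union_w hcorew hRw, hcoreeq, hRcard]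
          omega
        have hu₀w : (u₀ ∩ w).card = a := by
          rw [hu₀def, inter_w hcorew hRw, hcoreeq]
        by_cases hu₀F : u₀ ∈ F
        · -- collision: swap one core element
          -- the distance-1 close sets
          set D1 := Close.filter (fun y => (y \ w).card = 1) with hD1def
          set core1 := w.filter (fun e => ∀ y ∈ D1, e ∈ y) with hcore1def
          have hcore1w : core1 ⊆ w := Finset.filter_subset _ _
          have hcore1card : k ≤ core1.card + D1.card := by
            have hwc1 : w \ core1 ⊆ D1.biUnion (fun y => w \ y) := by
              intro e he
              rw [Finset.mem_sdiff] at he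
              have : ¬ (∀ y ∈ D1, e ∈ y) := by
                intro hall
                exact he.2 (Finset.mem_filter.mpr ⟨he.1, hall⟩)
              push_neg at this
              obtain ⟨y, hy, hey⟩ := this
              rw [Finset.mem_biUnion]
              exact ⟨y, hy, Finset.mem_sdiff.mpr ⟨he.1, hey⟩⟩
            have h1 : (w \ core1).card ≤ ∑ y ∈ D1, (w \ y).card :=
              le_trans (Finset.card_le_card hwc1) Finset.card_biUnion_le
            have h2 : ∑ y ∈ D1, (w \ y).card = ∑ y ∈ D1, (y \ w).card := by
              refine Finset.sum_congr rfl ?_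
              intro y hy
              exact Finset.card_sdiff_comm
                (by rw [hwk, hGk y (hCloseG y (Finset.mem_of_mem_filter y hy))])
            have h2' : ∑ y ∈ D1, (y \ w).card = D1.card := by
              rw [Finset.sum_congr rfl (fun y hy => (Finset.mem_filter.mp hy).2)]
              simp [hD1def]
            have h3 : (w \ core1).card = k - core1.card := by
              rw [Finset.card_sdiff_of_subset hcore1w, hwk]
            have h4 : core1.card ≤ k := hwk ▸ Finset.card_le_card hcore1w
            omega
          have hD1le : D1.card ≤ Close.card := Finset.card_filter_le _ _
          have hcore1big : a + 1 ≤ core1.card := by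
            have : Close.card ≤ t := by omega
            omega
          have hcoresub1 : core ⊆ core1 := by
            intro e he
            rw [hcore1def, Finset.mem_filter]
            exact ⟨hcorew he, fun y hy => hcorex e he y (Finset.mem_of_mem_filter y hy)⟩
          obtain ⟨yh, hyh⟩ := Finset.card_pos.mp
            (show 0 < (core1 \ core).card by
              rw [Finset.card_sdiff_of_subset hcoresub1]
              omega)
          rw [Finset.mem_sdiff] at hyh
          set S' := insert yh (core.erase x₀) with hS'def
          have hx₀core : x₀ ∈ core := hceq ▸ hcsub hx₀
          have hyhcore : yh ∉ core.erase x₀ := fun h => hyh.2 (Finset.mem_of_mem_erase h)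
          have hS'w : S' ⊆ w := by
            rw [hS'def]
            exact Finset.insert_subset (hcore1w hyh.1) ((Finset.erase_subset _ _).trans hcorew)
          have hS'card : S'.card = a := by
            rw [hS'def, Finset.card_insert_of_notMem hyhcore,
              Finset.card_erase_of_mem hx₀core, hcoreeq]
            omega
          set u' := S' ∪ R with hu'def
          have hu'k : u'.card = k := by
            rw [hu'def, card_union_w hS'w hRw, hS'card, hRcard]
            omega
          have hu'w : (u' ∩ w).card = a := by
            rw [hu'def, inter_w hS'w hRw, hS'card]
          have hx₀S' : x₀ ∉ S' := by
            rw [hS'def, Finset.mem_insert]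
            rintro (h | h)
            · exact hyh.2 (h ▸ hx₀core)
            · exact Finset.notMem_erase _ _ h
          have hu'F : u' ∉ F := by
            intro hu'F
            have hu'ne : u' ≠ w := by
              intro hequ
              rw [hequ, Finset.inter_self, hwk] at hu'w
              omega
            rcases hGsplit u' (hmemG u' hu'F hu'ne) with huc | huf
            · -- u' close: but x₀ ∈ core ⊆ u' yet x₀ ∉ u'
              have : x₀ ∈ u' := hcorex x₀ hx₀core u' huc
              rw [hu'def, Finset.mem_union] at this
              rcases this with h | h
              · exact hx₀S' h
              · exact hRw x₀ h (hcorew hx₀core)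
            · exact hFarempty u' huf
          refine ⟨u', hu'k, by omega, hu'F, ?_⟩
          intro x hx hxw
          rcases hGsplit x (hmemG x hx hxw) with hxc | hxf
          · by_cases hxd1 : (x \ w).card = 1
            · -- x at distance 1: yh ∈ x
              have hxD1 : x ∈ D1 := Finset.mem_filter.mpr ⟨hxc, hxd1⟩
              have hyhx : yh ∈ x := by
                have := hyh.1
                rw [hcore1def, Finset.mem_filter] at this
                exact this.2 x hxD1
              have hVsub : S' ∪ (x \ w) ⊆ u' ∩ x := by
                refine Finset.subset_inter ?_ ?_
                · exact Finset.union_subset Finset.subset_union_left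
                    ((hRsub x hxc).trans Finset.subset_union_right)
                · refine Finset.union_subset ?_ (Finset.sdiff_subset)
                  rw [hS'def]
                  refine Finset.insert_subset hyhx ?_
                  intro e' he'
                  exact hcorex e' (Finset.mem_of_mem_erase he') x hxc
              have hVcard : (S' ∪ (x \ w)).card = a + (x \ w).card := by
                rw [card_union_w hS'w (fun e' he' => (Finset.mem_sdiff.mp he').2), hS'card]
              have := Finset.card_le_card hVsub
              omega
            · -- x at distance ≥ 2
              have hxd2 : 2 ≤ (x \ w).card := by
                have := hGd x (hCloseG x hxc)
                omega
              have hVsub : core.erase x₀ ∪ (x \ w) ⊆ u' ∩ x := by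
                refine Finset.subset_inter ?_ ?_
                · refine Finset.union_subset ?_
                    ((hRsub x hxc).trans Finset.subset_union_right)
                  intro e' he'
                  exact Finset.mem_union_left _ (by
                    rw [hS'def]; exact Finset.mem_insert_of_mem he')
                · refine Finset.union_subset ?_ (Finset.sdiff_subset)
                  intro e' he'
                  exact hcorex e' (Finset.mem_of_mem_erase he') x hxc
              have hVcard : (core.erase x₀ ∪ (x \ w)).card = (a - 1) + (x \ w).card := by
                rw [card_union_w ((Finset.erase_subset _ _).trans hcorew)
                  (fun e' he' => (Finset.mem_sdiff.mp he').2),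
                  Finset.card_erase_of_mem hx₀core, hcoreeq]
              have := Finset.card_le_card hVsub
              omega
          · exact absurd hxf (hFarempty x)
        · exact ⟨u₀, hu₀k, by omega, hu₀F, hu₀cov⟩
    · -- Branch (ii)/(iii) : every close set at distance ≥ 2
      push_neg at hd1
      have hd2 : ∀ x ∈ Close, 2 ≤ (x \ w).card := by
        intro x hx
        have h1 := hGd x (hCloseG x hx)
        have h2 := hd1 x hx
        omega
      -- build the small common core c
      obtain ⟨c, hcw, hccore, hcprop, hcsz, hcbudget⟩ :
          ∃ c : Finset (Fin n), c ⊆ w ∧ (∀ e ∈ c, ∀ x ∈ Close, e ∈ x) ∧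
            (∀ x ∈ Close, a + 1 ≤ c.card + (x \ w).card) ∧
            c.card + 1 ≤ a ∧
            c.card + ∑ x ∈ Close, (x \ w).card ≤ (a + 1) * Close.card := by
        rcases Finset.eq_empty_or_nonempty Close with hCe | hCne
        · refine ⟨∅, Finset.empty_subset _, ?_, ?_, by rw [Finset.card_empty]; omega, ?_⟩
          · intro e he
            exact absurd he (Finset.notMem_empty e)
          · intro x hx
            rw [hCe] at hx
            exact absurd hx (Finset.notMem_empty x)
          · rw [hCe]
            simp
        · obtain ⟨xm, hxm, hxmmin⟩ := Finset.exists_min_image Close (fun x => (x \ w).card) hCne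
          have hCpos : 1 ≤ Close.card := Finset.card_pos.mpr ⟨xm, hxm⟩
          set dm := (xm \ w).card with hdmdef
          have hdm2 : 2 ≤ dm := hd2 xm hxm
          have hdma : dm ≤ a := hClosemem xm hxm
          have hSig : ∑ x ∈ Close, (x \ w).card ≤ dm + a * (Close.card - 1) := by
            rw [← Finset.add_sum_erase _ _ hxm]
            have hsum := Finset.sum_le_card_nsmul (Close.erase xm) (fun x => (x \ w).card) a
              (fun x hx => hClosemem x (Finset.mem_of_mem_erase hx))
            rw [Finset.card_erase_of_mem hxm, smul_eq_mul] at hsum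
            have : (Close.card - 1) * a = a * (Close.card - 1) := by ring
            omega
          have hprod : a * Close.card = a * (Close.card - 1) + a := by
            have h' : Close.card - 1 + 1 = Close.card := by omega
            calc a * Close.card = a * (Close.card - 1 + 1) := by rw [h']
              _ = a * (Close.card - 1) + a := by ring
          have hka : 1 + a * Close.card + Far.card ≤ k := by
            have h0 : 0 ≤ a * Far.card := Nat.zero_le _
            omega
          have hcorebig : a + 1 - dm ≤ core.card := by omega
          obtain ⟨c, hcsub, hccard⟩ := Finset.exists_subset_card_eq hcorebig
          refine ⟨c, hcsub.trans hcorew, ?_, ?_, ?_, ?_⟩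
          · intro e he
            exact hcorex e (hcsub he)
          · intro x hx
            have := hxmmin x hx
            rw [hccard]
            omega
          · rw [hccard]
            omega
          · rw [hccard]
            have h1 : a * Close.card + Close.card = (a + 1) * Close.card := by ring
            omega
      -- basic budget
      have hCOFTw : ∀ e ∈ CO ∪ FT, e ∉ w := by
        intro e he
        rcases Finset.mem_union.mp he with h | h
        · exact hCOw e h
        · exact hFTw e h
      set B1 := c ∪ (CO ∪ FT) with hB1def
      have hB1card : B1.card = c.card + (CO ∪ FT).card := card_union_w hcw hCOFTw
      have hB1k : B1.card ≤ k := by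
        have h1 : (CO ∪ FT).card ≤ CO.card + FT.card := Finset.card_union_le _ _
        have h2 : (a + 1) * Close.card + (a + 1) * Far.card
            = (a + 1) * (Close.card + Far.card) := by ring
        have h3 : Far.card * (a + 1) = (a + 1) * Far.card := by ring
        omega
      have hB1w : B1 ∩ w = c := inter_w hcw hCOFTw
      have hRsub : ∀ x ∈ Close, x \ w ⊆ CO ∪ FT :=
        fun x hx => (hCOsub x hx).trans Finset.subset_union_left
      have hRsubF : ∀ x ∈ Far, T x ⊆ CO ∪ FT :=
        fun x hx => (hFTsub x hx).trans Finset.subset_union_right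
      by_cases hB1lt : B1.card < k
      · -- Branch (ii) : there is padding room
        set m := min a (c.card + (k - B1.card)) with hmdef
        have hm2 : m ≤ a := min_le_left _ _
        have hm2' : m ≤ c.card + (k - B1.card) := min_le_right _ _
        have hm1 : c.card + 1 ≤ m := by
          refine le_min (by omega) (by omega)
        obtain ⟨X, hXsub, hXcard⟩ := Finset.exists_subset_card_eq
          (show m - c.card ≤ (w \ c).card by
            rw [Finset.card_sdiff_of_subset hcw, hwk]
            omega)
        have hXw : ∀ e ∈ X, e ∈ w ∧ e ∉ c := by
          intro e he
          exact Finset.mem_sdiff.mp (hXsub he)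
        have hCOFTm : (CO ∪ FT).card + m ≤ k := by omega
        have hWCF : (w ∪ (CO ∪ FT)).card = k + (CO ∪ FT).card := by
          rw [Finset.card_union_of_disjoint, hwk]
          rw [Finset.disjoint_left]
          intro e hew hee
          exact hCOFTw e hee hew
        have hmcase : m = a ∨ m = c.card + (k - B1.card) := by
          rcases le_total a (c.card + (k - B1.card)) with h | h
          · exact Or.inl (min_eq_left h)
          · exact Or.inr (min_eq_right h)
        have hpool : k - m - (CO ∪ FT).card ≤ (Finset.univ \ (w ∪ (CO ∪ FT))).card := by
          rw [Finset.card_sdiff_of_subset (Finset.subset_univ _), Finset.card_univ, Fintype.card_fin, hWCF]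
          rcases hmcase with h | h
          · omega
          · omega
        obtain ⟨O, hOsub, hOcard⟩ := Finset.exists_subset_card_eq hpool
        set R := (CO ∪ FT) ∪ O with hRdef
        have hOout : ∀ e ∈ O, e ∉ w ∪ (CO ∪ FT) := by
          intro e he
          exact (Finset.mem_sdiff.mp (hOsub he)).2
        have hRw : ∀ e ∈ R, e ∉ w := by
          intro e he
          rcases Finset.mem_union.mp he with h | h
          · exact hCOFTw e h
          · intro hew
            exact hOout e h (Finset.mem_union_left _ hew)
        have hRcard : R.card = k - m := by
          rw [hRdef, Finset.card_union_of_disjoint, hOcard]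
          · omega
          · rw [Finset.disjoint_right]
            intro e he hee
            exact hOout e he (Finset.mem_union_right _ hee)
        obtain ⟨y₀, hy₀⟩ := Finset.card_pos.mp (show 0 < X.card by omega)
        set C := (insert y₀ ((w \ c) \ X)).image
          (fun e => (c ∪ insert e (X.erase y₀)) ∪ R) with hCdef
        have hSprop : ∀ e ∈ insert y₀ ((w \ c) \ X),
            (c ∪ insert e (X.erase y₀)) ⊆ w ∧ (c ∪ insert e (X.erase y₀)).card = m ∧
            e ∉ c ∧ e ∉ X.erase y₀ ∧ c ⊆ c ∪ insert e (X.erase y₀) := by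
          intro e he
          have heprop : e ∈ w ∧ e ∉ c ∧ e ∉ X.erase y₀ := by
            rcases Finset.mem_insert.mp he with h | h
            · rw [h]
              exact ⟨(hXw y₀ hy₀).1, (hXw y₀ hy₀).2, Finset.notMem_erase _ _⟩
            · rw [Finset.mem_sdiff, Finset.mem_sdiff] at h
              exact ⟨h.1.1, h.1.2, fun hh => h.2 (Finset.mem_of_mem_erase hh)⟩
          refine ⟨?_, ?_, heprop.2.1, heprop.2.2, Finset.subset_union_left⟩
          · refine Finset.union_subset hcw (Finset.insert_subset heprop.1 ?_)
            intro e' he'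
            exact (hXw e' (Finset.mem_of_mem_erase he')).1
          · have hdisj : Disjoint c (insert e (X.erase y₀)) := by
              rw [Finset.disjoint_right]
              intro e' he'
              rcases Finset.mem_insert.mp he' with h | h
              · exact h ▸ heprop.2.1
              · exact (hXw e' (Finset.mem_of_mem_erase h)).2
            rw [Finset.card_union_of_disjoint hdisj,
              Finset.card_insert_of_notMem heprop.2.2,
              Finset.card_erase_of_mem hy₀, hXcard]
            omega
        have hCvalid : ∀ u ∈ C, u.card = k ∧ (u ∩ w).card = m ∧
            (∀ x ∈ F, x ≠ w → a + 1 ≤ (u ∩ x).card) := by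
          intro u hu
          rw [hCdef, Finset.mem_image] at hu
          obtain ⟨e, he, rfl⟩ := hu
          obtain ⟨hSw, hScard, _, _, hcS⟩ := hSprop e he
          set S := c ∪ insert e (X.erase y₀)
          refine ⟨?_, ?_, ?_⟩
          · rw [card_union_w hSw hRw, hScard, hRcard]
            omega
          · rw [inter_w hSw hRw, hScard]
          · intro x hx hxw
            rcases hGsplit x (hmemG x hx hxw) with hxc | hxf
            · have hVsub : c ∪ (x \ w) ⊆ (S ∪ R) ∩ x := by
                refine Finset.subset_inter ?_ ?_
                · exact Finset.union_subset (hcS.trans Finset.subset_union_left)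
                    (((hRsub x hxc).trans Finset.subset_union_left).trans
                      Finset.subset_union_right)
                · exact Finset.union_subset (fun e' he' => hccore e' he' x hxc)
                    (Finset.sdiff_subset)
              have hVcard : (c ∪ (x \ w)).card = c.card + (x \ w).card := by
                rw [card_union_w hcw (fun e' he' => (Finset.mem_sdiff.mp he').2)]
              have := Finset.card_le_card hVsub
              have := hcprop x hxc
              omega
            · have hVsub : T x ⊆ (S ∪ R) ∩ x := by
                refine Finset.subset_inter (((hRsubF x hxf).trans
                  Finset.subset_union_left).trans Finset.subset_union_right) ?_
                exact (hT x hxf).1.trans (Finset.sdiff_subset)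
              have := Finset.card_le_card hVsub
              rw [(hT x hxf).2] at this
              exact this
        have hCcard : C.card = 1 + (k - m) := by
          rw [hCdef, Finset.card_image_of_injOn]
          · have hnm : y₀ ∉ (w \ c) \ X := by
              rw [Finset.mem_sdiff]
              intro h
              exact h.2 hy₀
            rw [Finset.card_insert_of_notMem hnm, Finset.card_sdiff_of_subset hXsub,
              Finset.card_sdiff_of_subset hcw, hwk, hXcard]
            omega
          · intro e1 he1 e2 he2 heq
            dsimp only at heq
            obtain ⟨hs1, _, hc1, hx1, _⟩ := hSprop e1 he1
            obtain ⟨hs2, _, hc2, hx2, _⟩ := hSprop e2 he2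
            have hw1 := inter_w hs1 hRw
            have hw2 := inter_w hs2 hRw
            have hSeq : c ∪ insert e1 (X.erase y₀) = c ∪ insert e2 (X.erase y₀) := by
              rw [← hw1, ← hw2, heq]
            have he12 : e1 ∈ c ∪ insert e2 (X.erase y₀) := by
              rw [← hSeq]
              exact Finset.mem_union_right _ (Finset.mem_insert_self e1 _)
            rcases Finset.mem_union.mp he12 with h | h
            · exact absurd h hc1
            · rcases Finset.mem_insert.mp h with h' | h'
              · exact h'
              · exact absurd h' hx1
        have hbad : ∀ u ∈ C, u ∈ F → u ∈ F.erase w := by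
          intro u huC huF
          obtain ⟨hcard, hintw, _⟩ := hCvalid u huC
          refine Finset.mem_erase.mpr ⟨?_, huF⟩
          intro hequ
          rw [hequ, Finset.inter_self, hwk] at hintw
          omega
        have hcnt : (F.erase w).card < C.card := by
          rw [hCcard, Finset.card_erase_of_mem hw]
          omega
        obtain ⟨u, huC, huF⟩ := pigeonF hbad hcnt
        obtain ⟨hcard, hintw, hcov⟩ := hCvalid u huC
        exact ⟨u, hcard, by omega, huF, hcov⟩
      · -- Branch (iii) : B1 has exactly k elements
        have hB1keq : B1.card = k := by omega
        have hB1cov : ∀ x ∈ F, x ≠ w → a + 1 ≤ (B1 ∩ x).card := by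
          intro x hx hxw
          rcases hGsplit x (hmemG x hx hxw) with hxc | hxf
          · have hVsub : c ∪ (x \ w) ⊆ B1 ∩ x := by
              refine Finset.subset_inter ?_ ?_
              · exact Finset.union_subset Finset.subset_union_left
                  ((hRsub x hxc).trans Finset.subset_union_right)
              · exact Finset.union_subset (fun e' he' => hccore e' he' x hxc)
                  (Finset.sdiff_subset)
            have hVcard : (c ∪ (x \ w)).card = c.card + (x \ w).card := by
              rw [card_union_w hcw (fun e' he' => (Finset.mem_sdiff.mp he').2)]
            have := Finset.card_le_card hVsub
            have := hcprop x hxc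
            omega
          · have hVsub : T x ⊆ B1 ∩ x := by
              refine Finset.subset_inter ((hRsubF x hxf).trans Finset.subset_union_right) ?_
              exact (hT x hxf).1.trans (Finset.sdiff_subset)
            have := Finset.card_le_card hVsub
            rw [(hT x hxf).2] at this
            exact this
        by_cases hB1F : B1 ∈ F
        · -- collision: swap an element out of B1
          have hB1ne : B1 ≠ w := by
            intro hequ
            have : (B1 ∩ w).card = c.card := by rw [hB1w]
            rw [hequ, Finset.inter_self, hwk] at this
            omega
          have hB1G : B1 ∈ G := hmemG B1 hB1F hB1ne
          -- the witnesses needed for the other sets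
          set N := c ∪ ((Close.erase B1).biUnion (fun x => x \ w) ∪
            ((Far.erase B1).biUnion T)) with hNdef
          have hNcard : N.card < k := by
            have h1 : N.card ≤ c.card + ((Close.erase B1).biUnion (fun x => x \ w)).card
                + ((Far.erase B1).biUnion T).card := by
              calc N.card ≤ c.card + ((Close.erase B1).biUnion (fun x => x \ w) ∪
                  ((Far.erase B1).biUnion T)).card := Finset.card_union_le _ _
                _ ≤ _ := by
                    have := Finset.card_union_le ((Close.erase B1).biUnion (fun x => x \ w))
                      ((Far.erase B1).biUnion T)
                    omega
            have h2 : ((Close.erase B1).biUnion (fun x => x \ w)).card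
                ≤ ∑ x ∈ Close.erase B1, (x \ w).card := Finset.card_biUnion_le
            have h3 : ((Far.erase B1).biUnion T).card ≤ (Far.erase B1).card * (a + 1) :=
              Finset.card_biUnion_le_card_mul _ _ _
                (fun x hx => le_of_eq (hT x (Finset.mem_of_mem_erase hx)).2)
            have hexp2 : (a + 1) * Close.card + (a + 1) * Far.card
                = (a + 1) * (Close.card + Far.card) := by ring
            rcases hGsplit B1 hB1G with hBc | hBf
            · -- B1 close
              have hBsum := Finset.add_sum_erase Close (fun x => (x \ w).card) hBc
              have h5 : c.card + (B1 \ w).card = k := by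
                have hh := Finset.card_inter_add_card_sdiff B1 w
                rw [hB1w, hB1keq] at hh
                exact hh
              have h7 : (Far.erase B1).card * (a + 1) ≤ Far.card * (a + 1) :=
                Nat.mul_le_mul_right _ Finset.card_erase_le
              have h8 : Far.card * (a + 1) = (a + 1) * Far.card := by ring
              omega
            · -- B1 far
              have h4 : ∑ x ∈ Close.erase B1, (x \ w).card
                  ≤ ∑ x ∈ Close, (x \ w).card :=
                Finset.sum_le_sum_of_subset (Finset.erase_subset _ _)
              have h5 : (Far.erase B1).card = Far.card - 1 :=
                Finset.card_erase_of_mem hBf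
              have hFpos : 1 ≤ Far.card := Finset.card_pos.mpr ⟨B1, hBf⟩
              have h6 : (Far.erase B1).card * (a + 1) + (a + 1) = Far.card * (a + 1) := by
                rw [h5]
                have : Far.card - 1 + 1 = Far.card := by omega
                calc (Far.card - 1) * (a + 1) + (a + 1) = (Far.card - 1 + 1) * (a + 1) := by ring
                  _ = Far.card * (a + 1) := by rw [this]
              have h8 : Far.card * (a + 1) = (a + 1) * Far.card := by ring
              omega
          have hzex : ¬ B1 ⊆ N := by
            intro hsub
            have := Finset.card_le_card hsub
            omega
          rw [Finset.not_subset] at hzex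
          obtain ⟨z, hzB1, hzN⟩ := hzex
          have hzc : z ∉ c := fun h => hzN (Finset.mem_union_left _ h)
          have hzw : z ∉ w := by
            intro hzw
            have : z ∈ B1 ∩ w := Finset.mem_inter.mpr ⟨hzB1, hzw⟩
            rw [hB1w] at this
            exact hzc this
          set C := (w \ c).image (fun e => insert e (B1.erase z)) with hCdef
          have hCvalid : ∀ u ∈ C, u.card = k ∧ (u ∩ w).card = c.card + 1 ∧
              (∀ x ∈ F, x ≠ w → a + 1 ≤ (u ∩ x).card) ∧ u ≠ B1 := by
            intro u hu
            rw [hCdef, Finset.mem_image] at hu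
            obtain ⟨e, he, rfl⟩ := hu
            rw [Finset.mem_sdiff] at he
            have heB1 : e ∉ B1.erase z := by
              intro h
              have : e ∈ B1 ∩ w := Finset.mem_inter.mpr ⟨Finset.mem_of_mem_erase h, he.1⟩
              rw [hB1w] at this
              exact he.2 this
            have hintw : (insert e (B1.erase z)) ∩ w = insert e c := by
              ext e'
              simp only [Finset.mem_inter, Finset.mem_insert]
              constructor
              · rintro ⟨h1 | h1, h2⟩
                · exact Or.inl h1
                · refine Or.inr ?_
                  have : e' ∈ B1 ∩ w := Finset.mem_inter.mpr ⟨Finset.mem_of_mem_erase h1, h2⟩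
                  rw [hB1w] at this
                  exact this
              · rintro (h1 | h1)
                · exact ⟨Or.inl h1, h1 ▸ he.1⟩
                · refine ⟨Or.inr (Finset.mem_erase.mpr ⟨?_, Finset.mem_union_left _ h1⟩),
                    hcw h1⟩
                  intro hzz
                  exact hzc (hzz ▸ h1)
            refine ⟨?_, ?_, ?_, ?_⟩
            · rw [Finset.card_insert_of_notMem heB1, Finset.card_erase_of_mem hzB1, hB1keq]
              omega
            · rw [hintw, Finset.card_insert_of_notMem he.2]
            · intro x hx hxw
              by_cases hxB1 : x = B1
              · have hVsub : B1.erase z ⊆ (insert e (B1.erase z)) ∩ x := by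
                  rw [hxB1]
                  exact Finset.subset_inter (Finset.subset_insert _ _) (Finset.erase_subset _ _)
                have := Finset.card_le_card hVsub
                rw [Finset.card_erase_of_mem hzB1, hB1keq] at this
                omega
              · rcases hGsplit x (hmemG x hx hxw) with hxc | hxf
                · have hxC' : x ∈ Close.erase B1 := Finset.mem_erase.mpr ⟨hxB1, hxc⟩
                  have hxN : x \ w ⊆ N := by
                    intro e' he'
                    refine Finset.mem_union_right _ (Finset.mem_union_left _ ?_)
                    rw [Finset.mem_biUnion]
                    exact ⟨x, hxC', he'⟩
                  have hVsub : c ∪ (x \ w) ⊆ (insert e (B1.erase z)) ∩ x := by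
                    refine Finset.subset_inter ?_ ?_
                    · refine Finset.union_subset ?_ ?_
                      · intro e' he'
                        refine Finset.mem_insert_of_mem (Finset.mem_erase.mpr
                          ⟨fun hzz => hzc (hzz ▸ he'), Finset.mem_union_left _ he'⟩)
                      · intro e' he'
                        refine Finset.mem_insert_of_mem (Finset.mem_erase.mpr
                          ⟨fun hzz => hzN (hzz ▸ hxN he'), ?_⟩)
                        exact Finset.mem_union_right _ ((hRsub x hxc) he')
                    · exact Finset.union_subset (fun e' he' => hccore e' he' x hxc)
                        (Finset.sdiff_subset)
                  have hVcard : (c ∪ (x \ w)).card = c.card + (x \ w).card := by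
                    rw [card_union_w hcw (fun e' he' => (Finset.mem_sdiff.mp he').2)]
                  have := Finset.card_le_card hVsub
                  have := hcprop x hxc
                  omega
                · have hxF' : x ∈ Far.erase B1 := Finset.mem_erase.mpr ⟨hxB1, hxf⟩
                  have hxN : T x ⊆ N := by
                    intro e' he'
                    refine Finset.mem_union_right _ (Finset.mem_union_right _ ?_)
                    rw [Finset.mem_biUnion]
                    exact ⟨x, hxF', he'⟩
                  have hVsub : T x ⊆ (insert e (B1.erase z)) ∩ x := by
                    refine Finset.subset_inter ?_ ((hT x hxf).1.trans (Finset.sdiff_subset))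
                    intro e' he'
                    refine Finset.mem_insert_of_mem (Finset.mem_erase.mpr
                      ⟨fun hzz => hzN (hzz ▸ hxN he'), ?_⟩)
                    exact Finset.mem_union_right _ ((hRsubF x hxf) he')
                  have := Finset.card_le_card hVsub
                  rw [(hT x hxf).2] at this
                  exact this
            · -- u ≠ B1 since z is missing
              intro hequ
              have : z ∈ insert e (B1.erase z) := hequ.symm ▸ hzB1
              rcases Finset.mem_insert.mp this with h | h
              · rw [h] at hzw
                exact hzw he.1
              · exact (Finset.mem_erase.mp h).1 rfl
          have hCcard : C.card = k - c.card := by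
            rw [hCdef, Finset.card_image_of_injOn, Finset.card_sdiff_of_subset hcw, hwk]
            intro e1 he1 e2 he2 heq
            dsimp only at heq
            simp only [Finset.mem_coe, Finset.mem_sdiff] at he1 he2
            have he1B1 : e1 ∉ B1.erase z := by
              intro h
              have : e1 ∈ B1 ∩ w := Finset.mem_inter.mpr ⟨Finset.mem_of_mem_erase h, he1.1⟩
              rw [hB1w] at this
              exact he1.2 this
            have : e1 ∈ insert e2 (B1.erase z) := heq ▸ Finset.mem_insert_self e1 _
            rcases Finset.mem_insert.mp this with h | h
            · exact h
            · exact absurd h he1B1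
          have hbad : ∀ u ∈ C, u ∈ F → u ∈ (F.erase w).erase B1 := by
            intro u huC huF
            obtain ⟨hcard, hintw, _, huneB1⟩ := hCvalid u huC
            refine Finset.mem_erase.mpr ⟨huneB1, Finset.mem_erase.mpr ⟨?_, huF⟩⟩
            intro hequ
            rw [hequ, Finset.inter_self, hwk] at hintw
            omega
          have hcnt : ((F.erase w).erase B1).card < C.card := by
            have h1 : ((F.erase w).erase B1).card ≤ (F.erase w).card :=
              Finset.card_erase_le
            rw [hCcard, Finset.card_erase_of_mem hw] at *
            omega
          obtain ⟨u, huC, huF⟩ := pigeonF hbad hcnt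
          obtain ⟨hcard, hintw, hcov, _⟩ := hCvalid u huC
          exact ⟨u, hcard, by omega, huF, hcov⟩
        · -- B1 itself works
          have hB1intw : (B1 ∩ w).card = c.card := by rw [hB1w]
          exact ⟨B1, hB1keq, by omega, hB1F, hB1cov⟩

end Helpers

private lemma forced_empty {V : Type*} (G : SimpleGraph V) (v : V)
    (h : G.Forced (∅ : Set V) v) : False := by
  induction h with
  | init h => exact h
  | force hu ha hx ihu ihx => exact ihu

theorem stmt11 (n k a : ℕ) (hn : 2 * k ≤ n + a) (hak : a + 2 ≤ k)
    (hne : ¬ (n = 2 * k ∧ a = 0)) :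
    ⌈((k : ℚ) - a) / (a + 1)⌉₊ + 2 ≤ (genKneser n k a).zeroBlockingNumber := by
  classical
  set V := {s : Finset (Fin n) // s.card = k}
  set t := k / (a + 1) with htdef
  -- ceiling bound
  have hceil : ⌈((k : ℚ) - a) / (a + 1)⌉₊ ≤ t := by
    rw [Nat.ceil_le]
    have h1 : (0 : ℚ) < (a : ℚ) + 1 := by positivity
    rw [div_le_iff₀ h1]
    have h2 : k ≤ (a + 1) * t + a := by
      rw [htdef]
      have := Nat.div_add_mod k (a + 1)
      have := Nat.mod_lt k (show 0 < a + 1 by omega)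
      omega
    have h2' : (k : ℚ) ≤ ((a : ℚ) + 1) * (t : ℚ) + a := by exact_mod_cast h2
    linarith
  -- the vertex type is nonempty
  have hkn : k ≤ n := by omega
  obtain ⟨s0, hs0sub, hs0⟩ := Finset.exists_subset_card_eq
    (show k ≤ (Finset.univ : Finset (Fin n)).card by simpa using hkn)
  have hVne : Nonempty V := ⟨⟨s0, hs0⟩⟩
  -- main: any white set of size ≤ t+1 is not blocking
  have hmain : ∀ W : Set V, W.ncard ≤ t + 1 → ¬ (genKneser n k a).IsZeroBlocking W := by
    intro W hWc hblock
    apply hblock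
    intro v
    by_cases hv : v ∈ W
    · -- v is white, find a forcer
      set Fw : Finset (Finset (Fin n)) := (W.toFinite.toFinset).image Subtype.val with hFwdef
      have hFwcard : Fw.card ≤ t + 1 := by
        rw [hFwdef, Finset.card_image_of_injective _ Subtype.val_injective,
          ← Set.ncard_eq_toFinset_card _ W.toFinite]
        exact hWc
      have hFwk : ∀ x ∈ Fw, x.card = k := by
        intro x hx
        simp only [hFwdef, Finset.mem_image] at hx
        obtain ⟨y, _, rfl⟩ := hx
        exact y.2
      have hmemFw : ∀ y : V, y ∈ W ↔ (y : Finset (Fin n)) ∈ Fw := by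
        intro y
        simp only [hFwdef, Finset.mem_image, Set.Finite.mem_toFinset]
        constructor
        · intro h; exact ⟨y, h, rfl⟩
        · rintro ⟨z, hz, hzy⟩
          have : z = y := Subtype.ext hzy
          rwa [← this]
      obtain ⟨u, huk, huw, huF, hucov⟩ := exists_forcer hn hak hne Fw hFwcard hFwk
        ((hmemFw v).mp hv)
      set uv : V := ⟨u, huk⟩ with huvdef
      have huvW : uv ∉ W := fun h => huF ((hmemFw uv).mp h)
      have hadj : (genKneser n k a).Adj uv v := by
        refine ⟨?_, huw⟩
        intro h
        have : (uv : Finset (Fin n)) ∈ Fw := by rw [h]; exact (hmemFw v).mp hv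
        exact huF this
      refine SimpleGraph.Forced.force (SimpleGraph.Forced.init huvW) hadj ?_
      intro x hx hxv
      refine SimpleGraph.Forced.init ?_
      intro hxW
      have hxne : (x : Finset (Fin n)) ≠ (v : Finset (Fin n)) := fun h => hxv (Subtype.ext h)
      have := hucov x ((hmemFw x).mp hxW) hxne
      have hadj2 := hx.2
      have huveq : (uv : Finset (Fin n)) = u := rfl
      rw [huveq] at hadj2
      omega
    · exact SimpleGraph.Forced.init hv
  -- blocking sets exist
  have hblockuniv : (genKneser n k a).IsZeroBlocking (Set.univ : Set V) := by
    intro hforce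
    obtain ⟨v⟩ := hVne
    have := hforce v
    rw [Set.compl_univ] at this
    exact forced_empty _ v this
  have hSne : {m | ∃ W : Set V, (genKneser n k a).IsZeroBlocking W ∧ W.ncard = m}.Nonempty :=
    ⟨(Set.univ : Set V).ncard, Set.univ, hblockuniv, rfl⟩
  have hlb : t + 2 ≤ (genKneser n k a).zeroBlockingNumber := by
    apply le_csInf hSne
    rintro m ⟨W, hWb, rfl⟩
    by_contra hlt
    push_neg at hlt
    exact hmain W (by omega) hWb
  omega
end

section
/- If n ≥ k(⌈(k-a)/(a+1)⌉ + 2) and k - 2 ≥ a ≥ 0, then B(K(n,k,a)) = ⌈(k-a)/(a+1)⌉ + 2. -/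
lemma myCeil (a k : ℕ) (hak : a + 2 ≤ k) :
    ⌈((k : ℚ) - a) / (a + 1)⌉₊ = k / (a + 1) := by
  have ha1 : (0:ℚ) < (a:ℚ) + 1 := by positivity
  have ht1 : 1 ≤ k / (a+1) := (Nat.one_le_div_iff (Nat.succ_pos a)).mpr (by omega)
  have htk : (k/(a+1)) * (a+1) ≤ k := Nat.div_mul_le_self k (a+1)
  have hkt : k < (k/(a+1) + 1) * (a+1) :=
    (Nat.div_lt_iff_lt_mul (Nat.succ_pos a)).mp (Nat.lt_succ_self _)
  have hkt' : k ≤ (k/(a+1)) * (a+1) + a := by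
    have : (k/(a+1) + 1) * (a+1) = (k/(a+1)) * (a+1) + (a+1) := by ring
    omega
  rw [Nat.ceil_eq_iff (by omega)]
  constructor
  · rw [lt_div_iff₀ ha1, Nat.cast_sub ht1]
    push_cast
    have : ((k/(a+1) : ℕ) : ℚ) * ((a:ℚ)+1) ≤ k := by exact_mod_cast htk
    nlinarith [this]
  · rw [div_le_iff₀ ha1]
    have : (k:ℚ) ≤ ((k/(a+1) : ℕ) : ℚ) * ((a:ℚ)+1) + a := by exact_mod_cast hkt'
    linarith

lemma core (n k a t : ℕ) (hak : a + 2 ≤ k) (ht1 : 1 ≤ t)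
    (htk : t * (a+1) ≤ k) (hn : k * (t + 2) ≤ n)
    (A : Finset (Fin n)) (hA : A.card = k)
    (F : Finset (Finset (Fin n))) (hFk : ∀ I ∈ F, I.card = k)
    (hAF : A ∉ F) (hF : F.card ≤ t) :
    ∃ B : Finset (Fin n), B.card = k ∧ (B ∩ A).card ≤ a ∧
      (∀ I ∈ F, a + 1 ≤ (B ∩ I).card) ∧ B ∉ F ∧ B ≠ A := by
  classical
  -- every member differs from A, so I \ A is nonempty
  have hd1 : ∀ I ∈ F, 1 ≤ (I \ A).card := by
    intro I hI
    rcases Finset.eq_empty_or_nonempty (I \ A) with h | h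
    · exfalso
      have hsub : I ⊆ A := by
        intro x hx
        by_contra hxA
        exact Finset.notMem_empty x (h ▸ Finset.mem_sdiff.mpr ⟨hx, hxA⟩)
      have : I = A := Finset.eq_of_subset_of_card_le hsub (by rw [hA, hFk I hI])
      exact hAF (this ▸ hI)
    · exact Finset.card_pos.mpr h
  set C := F.filter (fun I => (I \ A).card ≤ a) with hCdef
  have hCF : C ⊆ F := Finset.filter_subset _ _
  set δ : ℕ := if h : C.Nonempty then C.inf' h (fun I => (I \ A).card) else a + 1 with hδdef
  have hδle : ∀ I ∈ C, δ ≤ (I \ A).card := by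
    intro I hI
    rw [hδdef, dif_pos ⟨I, hI⟩]
    exact Finset.inf'_le _ hI
  have hδ1 : 1 ≤ δ := by
    rw [hδdef]
    split_ifs with h
    · obtain ⟨I₀, hI₀, hEq⟩ := Finset.exists_mem_eq_inf' h (fun I => (I \ A).card)
      rw [hEq]; exact hd1 I₀ (hCF hI₀)
    · omega
  have hδa1 : δ ≤ a + 1 := by
    rw [hδdef]
    split_ifs with h
    · obtain ⟨I₀, hI₀, hEq⟩ := Finset.exists_mem_eq_inf' h (fun I => (I \ A).card)
      rw [hEq]
      have := (Finset.mem_filter.mp hI₀).2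
      omega
    · omega
  -- the sum of the defects over C
  have hsum : (a + 1 - δ) + ∑ I ∈ C, (I \ A).card ≤ C.card * (a+1) := by
    rcases Finset.eq_empty_or_nonempty C with h | h
    · simp [h, hδdef]
    · obtain ⟨I₀, hI₀, hEq⟩ := Finset.exists_mem_eq_inf' h (fun I => (I \ A).card)
      have hsplit : ∑ I ∈ C, (I \ A).card
          = (I₀ \ A).card + ∑ I ∈ C.erase I₀, (I \ A).card :=
        (Finset.add_sum_erase _ _ hI₀).symm
      have hbound : ∑ I ∈ C.erase I₀, (I \ A).card ≤ (C.card - 1) * a := by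
        have := Finset.sum_le_card_nsmul (C.erase I₀) (fun I => (I \ A).card) a
          (fun I hI => (Finset.mem_filter.mp (Finset.mem_of_mem_erase hI)).2)
        rwa [Finset.card_erase_of_mem hI₀, smul_eq_mul] at this
      have hc1 : 1 ≤ C.card := Finset.card_pos.mpr h
      have hδI₀ : δ = (I₀ \ A).card := by rw [hδdef, dif_pos h]; exact hEq
      have h1 : (a + 1 - δ) + δ = a + 1 := by omega
      calc (a + 1 - δ) + ∑ I ∈ C, (I \ A).card
          = (a + 1 - δ) + δ + ∑ I ∈ C.erase I₀, (I \ A).card := by rw [hsplit, hδI₀]; ring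
        _ ≤ (a + 1) + (C.card - 1) * a := by omega
        _ ≤ C.card * (a + 1) := by
            rcases Nat.exists_eq_succ_of_ne_zero (by omega : C.card ≠ 0) with ⟨c, hc⟩
            rw [hc]; simp only [Nat.succ_sub_one]; nlinarith
  -- the common part D of A and all members of C
  set D : Finset (Fin n) := A \ C.biUnion (fun I => A \ I) with hDdef
  have hDA : D ⊆ A := Finset.sdiff_subset
  have hDI : ∀ I ∈ C, D ⊆ I := by
    intro I hI x hx
    rw [hDdef, Finset.mem_sdiff] at hx
    by_contra hxI
    exact hx.2 (Finset.mem_biUnion.mpr ⟨I, hI, Finset.mem_sdiff.mpr ⟨hx.1, hxI⟩⟩)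
  have hsdiffcard : ∀ I ∈ F, (A \ I).card = (I \ A).card := by
    intro I hI
    have h1 := Finset.card_sdiff_add_card_inter A I
    have h2 := Finset.card_sdiff_add_card_inter I A
    rw [Finset.inter_comm] at h2
    have := hFk I hI
    omega
  
  have hCt : C.card ≤ t := le_trans (Finset.card_le_card hCF) hF
  have hDcard : a + 1 - δ ≤ D.card := by
    have hcover : A ⊆ D ∪ C.biUnion (fun I => A \ I) := by
      intro x hx
      by_cases hxU : x ∈ C.biUnion (fun I => A \ I)
      · exact Finset.mem_union_right _ hxU
      · exact Finset.mem_union_left _ (Finset.mem_sdiff.mpr ⟨hx, hxU⟩)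
    have h1 : k ≤ D.card + ∑ I ∈ C, (A \ I).card := by
      calc k = A.card := hA.symm
        _ ≤ (D ∪ C.biUnion (fun I => A \ I)).card := Finset.card_le_card hcover
        _ ≤ D.card + (C.biUnion (fun I => A \ I)).card := Finset.card_union_le _ _
        _ ≤ D.card + ∑ I ∈ C, (A \ I).card := Nat.add_le_add_left Finset.card_biUnion_le _
    have h2 : ∑ I ∈ C, (A \ I).card = ∑ I ∈ C, (I \ A).card :=
      Finset.sum_congr rfl (fun I hI => hsdiffcard I (hCF hI))
    have h3 : (a + 1 - δ) + ∑ I ∈ C, (I \ A).card ≤ k :=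
      le_trans hsum (le_trans (Nat.mul_le_mul_right _ hCt) htk)
    omega
  obtain ⟨X, hXD, hXcard⟩ := Finset.exists_subset_card_eq hDcard
  have hpc : ∀ I, I ∈ F \ C → ∃ p, p ⊆ I \ A ∧ p.card = a + 1 := by
    intro I hI
    rw [Finset.mem_sdiff, hCdef, Finset.mem_filter] at hI
    have hle : a + 1 ≤ (I \ A).card := by
      rcases hI with ⟨hIF, hnot⟩
      by_contra hcon
      exact hnot ⟨hIF, by omega⟩
    exact Finset.exists_subset_card_eq hle
  choose! pc hpc1 hpc2 using hpc
  set P : Finset (Fin n) := X ∪ C.biUnion (fun I => I \ A) ∪ (F \ C).biUnion pc with hPdef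
  have hPk : P.card ≤ k := by
    have h1 : P.card ≤ X.card + (∑ I ∈ C, (I \ A).card) + (F \ C).card * (a+1) := by
      calc P.card ≤ (X ∪ C.biUnion (fun I => I \ A)).card + ((F \ C).biUnion pc).card :=
            Finset.card_union_le _ _
        _ ≤ X.card + (C.biUnion (fun I => I \ A)).card + ((F \ C).biUnion pc).card :=
            Nat.add_le_add_right (Finset.card_union_le _ _) _
        _ ≤ X.card + (∑ I ∈ C, (I \ A).card) + ((F \ C).biUnion pc).card := by
            exact Nat.add_le_add_right (Nat.add_le_add_left Finset.card_biUnion_le _) _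
        _ ≤ X.card + (∑ I ∈ C, (I \ A).card) + (F \ C).card * (a+1) := by
            refine Nat.add_le_add_left ?_ _
            calc ((F \ C).biUnion pc).card ≤ ∑ I ∈ F \ C, (pc I).card := Finset.card_biUnion_le
              _ ≤ (F \ C).card * (a+1) := by
                  have := Finset.sum_le_card_nsmul (F \ C) (fun I => (pc I).card) (a+1)
                    (fun I hI => le_of_eq (hpc2 I hI))
                  simpa using this
    have h2 : X.card + (∑ I ∈ C, (I \ A).card) ≤ C.card * (a+1) := by rw [hXcard]; exact hsum
    have h3 : C.card * (a+1) + (F \ C).card * (a+1) = F.card * (a+1) := by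
      rw [Finset.card_sdiff_of_subset hCF, ← Nat.add_mul, Nat.add_sub_cancel' (Finset.card_le_card hCF)]
    have h4 : F.card * (a+1) ≤ t * (a+1) := Nat.mul_le_mul_right _ hF
    omega
  have hPsub : P ⊆ A ∪ F.biUnion id := by
    intro x hx
    rw [hPdef] at hx
    rcases Finset.mem_union.mp hx with hx | hx
    · rcases Finset.mem_union.mp hx with hx | hx
      · exact Finset.mem_union_left _ (hDA (hXD hx))
      · obtain ⟨I, hI, hxI⟩ := Finset.mem_biUnion.mp hx
        exact Finset.mem_union_right _
          (Finset.mem_biUnion.mpr ⟨I, hCF hI, (Finset.mem_sdiff.mp hxI).1⟩)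
    · obtain ⟨I, hI, hxI⟩ := Finset.mem_biUnion.mp hx
      exact Finset.mem_union_right _
        (Finset.mem_biUnion.mpr ⟨I, (Finset.mem_sdiff.mp hI).1,
          (Finset.mem_sdiff.mp (hpc1 I hI hxI)).1⟩)
  have hPA : P ∩ A ⊆ X := by
    intro x hx
    obtain ⟨hxP, hxA⟩ := Finset.mem_inter.mp hx
    rw [hPdef] at hxP
    rcases Finset.mem_union.mp hxP with hx' | hx'
    · rcases Finset.mem_union.mp hx' with hx' | hx'
      · exact hx'
      · obtain ⟨I, hI, hxI⟩ := Finset.mem_biUnion.mp hx'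
        exact absurd hxA (Finset.mem_sdiff.mp hxI).2
    · obtain ⟨I, hI, hxI⟩ := Finset.mem_biUnion.mp hx'
      exact absurd hxA (Finset.mem_sdiff.mp (hpc1 I hI hxI)).2
  have hPAcard : (P ∩ A).card ≤ a := by
    have := Finset.card_le_card hPA
    omega
  have hPI : ∀ I ∈ F, a + 1 ≤ (P ∩ I).card := by
    intro I hIF
    by_cases hIC : I ∈ C
    · have hsub : (I \ A) ∪ X ⊆ P ∩ I := by
        intro x hx
        rcases Finset.mem_union.mp hx with hx | hx
        · refine Finset.mem_inter.mpr ⟨?_, (Finset.mem_sdiff.mp hx).1⟩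
          rw [hPdef]
          exact Finset.mem_union_left _
            (Finset.mem_union_right _ (Finset.mem_biUnion.mpr ⟨I, hIC, hx⟩))
        · refine Finset.mem_inter.mpr ⟨?_, hDI I hIC (hXD hx)⟩
          rw [hPdef]
          exact Finset.mem_union_left _ (Finset.mem_union_left _ hx)
      have hdisj : Disjoint (I \ A) X := by
        rw [Finset.disjoint_left]
        intro x hx hxX
        exact (Finset.mem_sdiff.mp hx).2 (hDA (hXD hxX))
      have hcard : ((I \ A) ∪ X).card = (I \ A).card + X.card :=
        Finset.card_union_of_disjoint hdisj
      have := Finset.card_le_card hsub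
      have hδI := hδle I hIC
      omega
    · have hIFC : I ∈ F \ C := Finset.mem_sdiff.mpr ⟨hIF, hIC⟩
      have hsub : pc I ⊆ P ∩ I := by
        intro x hx
        refine Finset.mem_inter.mpr ⟨?_, (Finset.mem_sdiff.mp (hpc1 I hIFC hx)).1⟩
        rw [hPdef]
        exact Finset.mem_union_right _ (Finset.mem_biUnion.mpr ⟨I, hIFC, hx⟩)
      have := Finset.card_le_card hsub
      rw [hpc2 I hIFC] at this
      exact this
  set R : Finset (Fin n) := Finset.univ \ (A ∪ F.biUnion id) with hRdef
  have hRmem : ∀ x ∈ R, x ∉ A ∧ ∀ I ∈ F, x ∉ I := by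
    intro x hx
    rw [hRdef, Finset.mem_sdiff] at hx
    refine ⟨fun h => hx.2 (Finset.mem_union_left _ h), fun I hI h => ?_⟩
    exact hx.2 (Finset.mem_union_right _ (Finset.mem_biUnion.mpr ⟨I, hI, h⟩))
  have hRcard : k ≤ R.card := by
    have h1 : (A ∪ F.biUnion id).card ≤ k + F.card * k := by
      calc (A ∪ F.biUnion id).card ≤ A.card + (F.biUnion id).card := Finset.card_union_le _ _
        _ ≤ k + ∑ I ∈ F, I.card := by
            rw [hA]; exact Nat.add_le_add_left Finset.card_biUnion_le _
        _ ≤ k + F.card * k := by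
            refine Nat.add_le_add_left ?_ _
            have := Finset.sum_le_card_nsmul F (fun I => I.card) k
              (fun I hI => le_of_eq (hFk I hI))
            simpa using this
    have h2 : R.card = n - (A ∪ F.biUnion id).card := by
      rw [hRdef, Finset.card_sdiff_of_subset (Finset.subset_univ _), Finset.card_univ, Fintype.card_fin]
    have h3 : F.card * k ≤ t * k := Nat.mul_le_mul_right _ hF
    have h4 : k * (t + 2) = t * k + k + k := by ring
    omega
  have hPR : Disjoint P R := by
    rw [Finset.disjoint_left]
    intro x hxP hxR
    obtain ⟨hxA, hxF⟩ := hRmem x hxR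
    rcases Finset.mem_union.mp (hPsub hxP) with h | h
    · exact hxA h
    · obtain ⟨I, hI, hxI⟩ := Finset.mem_biUnion.mp h
      exact hxF I hI hxI
  obtain ⟨Q, hQR, hQcard⟩ := Finset.exists_subset_card_eq (le_trans (Nat.sub_le k P.card) hRcard)
  have hPQ : Disjoint P Q := hPR.mono_right hQR
  set B : Finset (Fin n) := P ∪ Q with hBdef
  have hBcard : B.card = k := by
    rw [hBdef, Finset.card_union_of_disjoint hPQ, hQcard]
    omega
  have hBA : (B ∩ A).card ≤ a := by
    have hsub : B ∩ A ⊆ P ∩ A := by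
      intro x hx
      obtain ⟨hxB, hxA⟩ := Finset.mem_inter.mp hx
      rcases Finset.mem_union.mp hxB with h | h
      · exact Finset.mem_inter.mpr ⟨h, hxA⟩
      · exact absurd hxA (hRmem x (hQR h)).1
    exact le_trans (Finset.card_le_card hsub) hPAcard
  have hBI : ∀ I ∈ F, a + 1 ≤ (B ∩ I).card := by
    intro I hI
    refine le_trans (hPI I hI) (Finset.card_le_card ?_)
    exact Finset.inter_subset_inter (Finset.subset_union_left) le_rfl
  have hBneA : B ≠ A := by
    intro h
    rw [h, Finset.inter_self, hA] at hBA
    omega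
  by_cases hBF : B ∈ F
  · -- swap argument
    set T := F.filter (fun I => (B ∩ I).card ≤ a + 1) with hTdef
    have hTF : T ⊆ F := Finset.filter_subset _ _
    have hBB : (B ∩ B).card = k := by rw [Finset.inter_self, hBcard]
    have hBT : B ∉ T := by
      intro h
      have := (Finset.mem_filter.mp h).2
      omega
    have hTB : T ⊆ F.erase B := by
      intro I hI
      refine Finset.mem_erase.mpr ⟨?_, hTF hI⟩
      intro h
      exact hBT (h ▸ hI)
    have hTcard : T.card ≤ t - 1 := by
      have h1 := Finset.card_le_card hTB
      rw [Finset.card_erase_of_mem hBF] at h1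
      omega
    have hcoversub : B ∩ (A ∪ T.biUnion id) ⊆ (B ∩ A) ∪ T.biUnion (fun I => B ∩ I) := by
      intro x hx
      obtain ⟨hxB, hxc⟩ := Finset.mem_inter.mp hx
      rcases Finset.mem_union.mp hxc with h | h
      · exact Finset.mem_union_left _ (Finset.mem_inter.mpr ⟨hxB, h⟩)
      · obtain ⟨I, hI, hxI⟩ := Finset.mem_biUnion.mp h
        exact Finset.mem_union_right _
          (Finset.mem_biUnion.mpr ⟨I, hI, Finset.mem_inter.mpr ⟨hxB, hxI⟩⟩)
    have hcovercard : (B ∩ (A ∪ T.biUnion id)).card < k := by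
      have h1 : (B ∩ (A ∪ T.biUnion id)).card ≤ (B ∩ A).card + ∑ I ∈ T, (B ∩ I).card := by
        calc (B ∩ (A ∪ T.biUnion id)).card
            ≤ ((B ∩ A) ∪ T.biUnion (fun I => B ∩ I)).card := Finset.card_le_card hcoversub
          _ ≤ (B ∩ A).card + (T.biUnion (fun I => B ∩ I)).card := Finset.card_union_le _ _
          _ ≤ (B ∩ A).card + ∑ I ∈ T, (B ∩ I).card :=
              Nat.add_le_add_left Finset.card_biUnion_le _
      have h2 : ∑ I ∈ T, (B ∩ I).card ≤ T.card * (a + 1) := by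
        have := Finset.sum_le_card_nsmul T (fun I => (B ∩ I).card) (a+1)
          (fun I hI => (Finset.mem_filter.mp hI).2)
        simpa using this
      have h3 : T.card * (a+1) ≤ (t-1) * (a+1) := Nat.mul_le_mul_right _ hTcard
      have h4 : (t-1) * (a+1) + (a+1) = t * (a+1) := by
        rcases Nat.exists_eq_succ_of_ne_zero (by omega : t ≠ 0) with ⟨s, hs⟩
        rw [hs]; simp only [Nat.succ_sub_one, Nat.succ_eq_add_one]; ring
      omega
    have hxex : ∃ x ∈ B, x ∉ A ∪ T.biUnion id := by
      by_contra hcon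
      push_neg at hcon
      have : B ∩ (A ∪ T.biUnion id) = B := by
        apply Finset.inter_eq_left.mpr
        intro x hx
        exact hcon x hx
      rw [this, hBcard] at hcovercard
      omega
    obtain ⟨x, hxB, hxcov⟩ := hxex
    have hxA : x ∉ A := fun h => hxcov (Finset.mem_union_left _ h)
    have hxT : ∀ I ∈ T, x ∉ I := fun I hI h =>
      hxcov (Finset.mem_union_right _ (Finset.mem_biUnion.mpr ⟨I, hI, h⟩))
    have hBsubU : B ⊆ F.biUnion id := fun y hy => Finset.mem_biUnion.mpr ⟨B, hBF, hy⟩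
    have hzex : ∃ z ∈ R, z ∉ B := by
      have hR1 : R.Nonempty := Finset.card_pos.mp (by omega)
      obtain ⟨z, hz⟩ := hR1
      exact ⟨z, hz, fun h => (hRmem z hz).2 B hBF h⟩
    obtain ⟨z, hzR, hzB⟩ := hzex
    set B' : Finset (Fin n) := insert z (B.erase x) with hB'def
    have hzBe : z ∉ B.erase x := fun h => hzB (Finset.mem_of_mem_erase h)
    have hB'card : B'.card = k := by
      rw [hB'def, Finset.card_insert_of_notMem hzBe, Finset.card_erase_of_mem hxB, hBcard]
      omega
    have hB'A : (B' ∩ A).card ≤ a := by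
      refine le_trans (Finset.card_le_card ?_) hBA
      intro y hy
      obtain ⟨hyB', hyA⟩ := Finset.mem_inter.mp hy
      rcases Finset.mem_insert.mp hyB' with h | h
      · exact absurd (h ▸ hyA) (hRmem z hzR).1
      · exact Finset.mem_inter.mpr ⟨Finset.mem_of_mem_erase h, hyA⟩
    refine ⟨B', hB'card, hB'A, ?_, ?_, ?_⟩
    · intro I hIF
      by_cases hIT : I ∈ T
      · have hsub : B ∩ I ⊆ B' ∩ I := by
          intro y hy
          obtain ⟨hyB, hyI⟩ := Finset.mem_inter.mp hy
          have hyx : y ≠ x := fun h => hxT I hIT (h ▸ hyI)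
          exact Finset.mem_inter.mpr
            ⟨Finset.mem_insert_of_mem (Finset.mem_erase.mpr ⟨hyx, hyB⟩), hyI⟩
        exact le_trans (hBI I hIF) (Finset.card_le_card hsub)
      · have h2 : a + 2 ≤ (B ∩ I).card := by
          have := Finset.mem_filter.not.mp hIT
          push_neg at this
          exact this hIF
        have hsub : (B ∩ I).erase x ⊆ B' ∩ I := by
          intro y hy
          obtain ⟨hyx, hy2⟩ := Finset.mem_erase.mp hy
          obtain ⟨hyB, hyI⟩ := Finset.mem_inter.mp hy2
          exact Finset.mem_inter.mpr
            ⟨Finset.mem_insert_of_mem (Finset.mem_erase.mpr ⟨hyx, hyB⟩), hyI⟩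
        have h3 := Finset.card_le_card hsub
        have h4 := Finset.card_erase_of_mem (a := x) (s := B ∩ I)
        by_cases hxBI : x ∈ B ∩ I
        · have := h4 hxBI; omega
        · have : (B ∩ I).erase x = B ∩ I := Finset.erase_eq_of_notMem hxBI
          rw [this] at h3
          omega
    · intro hB'F
      have hzB' : z ∈ B' := Finset.mem_insert_self _ _
      exact (hRmem z hzR).2 B' hB'F hzB'
    · intro h
      rw [h, Finset.inter_self, hA] at hB'A
      omega
  · refine ⟨B, hBcard, hBA, hBI, hBF, hBneA⟩


section Rest

abbrev KV (n k : ℕ) := {s : Finset (Fin n) // s.card = k}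


lemma keyLemma (n k a t : ℕ) (hak : a + 2 ≤ k) (ht1 : 1 ≤ t)
    (htk : t * (a+1) ≤ k) (hn : k * (t + 2) ≤ n)
    (U : Finset (KV n k)) (hUne : U.Nonempty) (hUcard : U.card ≤ t + 1) :
    ∃ B w : KV n k, w ∈ U ∧ B ∉ U ∧ (genKneser n k a).Adj B w ∧
      ∀ x ∈ U, (genKneser n k a).Adj B x → x = w := by
  classical
  obtain ⟨A, hAU⟩ := hUne
  set F : Finset (Finset (Fin n)) := (U.erase A).image Subtype.val with hFdef
  have hFk : ∀ I ∈ F, I.card = k := by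
    intro I hI
    obtain ⟨x, hx, rfl⟩ := Finset.mem_image.mp hI
    exact x.2
  have hAF : A.val ∉ F := by
    intro h
    obtain ⟨x, hx, hxe⟩ := Finset.mem_image.mp h
    exact (Finset.mem_erase.mp hx).1 (Subtype.ext hxe)
  have hFc : F.card ≤ t := by
    rw [hFdef, Finset.card_image_of_injective _ Subtype.val_injective,
      Finset.card_erase_of_mem hAU]
    omega
  obtain ⟨B, hB1, hB2, hB3, hB4, hB5⟩ := core n k a t hak ht1 htk hn A.val A.2 F hFk hAF hFc
  refine ⟨⟨B, hB1⟩, A, hAU, ?_, ?_, ?_⟩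
  · intro h
    by_cases hBA : (⟨B, hB1⟩ : KV n k) = A
    · exact hB5 (congrArg Subtype.val hBA)
    · exact hB4 (Finset.mem_image.mpr ⟨⟨B, hB1⟩, Finset.mem_erase.mpr ⟨hBA, h⟩, rfl⟩)
  · exact ⟨fun h => hB5 (congrArg Subtype.val h), hB2⟩
  · intro x hx hadj
    by_contra hxA
    have hxF : x.val ∈ F := Finset.mem_image.mpr ⟨x, Finset.mem_erase.mpr ⟨hxA, hx⟩, rfl⟩
    have h1 := hB3 x.val hxF
    have h2 : (B ∩ x.val).card ≤ a := hadj.2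
    omega

lemma lowerBound (n k a t : ℕ) (hak : a + 2 ≤ k) (ht1 : 1 ≤ t)
    (htk : t * (a+1) ≤ k) (hn : k * (t + 2) ≤ n)
    (W : Set (KV n k)) (hW : (genKneser n k a).IsZeroBlocking W) :
    t + 2 ≤ W.ncard := by
  classical
  by_contra hcon
  push_neg at hcon
  set G := genKneser n k a with hG
  set U : Set (KV n k) := {v | ¬ G.Forced Wᶜ v} with hU
  have hUW : U ⊆ W := by
    intro v hv
    by_contra h
    exact hv (SimpleGraph.Forced.init h)
  have hUne : U.Nonempty := by
    by_contra h
    rw [Set.not_nonempty_iff_eq_empty] at h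
    apply hW
    intro v
    by_contra hv
    have hvU : v ∈ U := hv
    rw [h] at hvU
    exact hvU
  have hUcard : U.ncard ≤ t + 1 := by
    have := Set.ncard_le_ncard hUW (Set.toFinite W)
    omega
  set U' := (Set.toFinite U).toFinset with hU'
  have hU'ne : U'.Nonempty := by
    rwa [hU', Set.Finite.toFinset_nonempty]
  have hU'card : U'.card ≤ t + 1 := by
    have h := Set.ncard_eq_toFinset_card U (Set.toFinite U)
    rw [hU']
    omega
  obtain ⟨B, w, hwU, hBU, hadj, huniq⟩ := keyLemma n k a t hak ht1 htk hn U' hU'ne hU'card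
  have hwU2 : w ∈ U := (Set.Finite.mem_toFinset _).mp hwU
  have hBforced : G.Forced Wᶜ B := by
    by_contra h
    exact hBU ((Set.Finite.mem_toFinset _).mpr h)
  have : G.Forced Wᶜ w := by
    refine SimpleGraph.Forced.force hBforced hadj ?_
    intro x hadjx hxw
    by_contra hx
    have hxU' : x ∈ U' := (Set.Finite.mem_toFinset _).mpr hx
    exact hxw (huniq x hxU' hadjx)
  exact hwU2 this

lemma disjSets (n k t : ℕ) (hn : k * (t + 2) ≤ n) :
    ∃ g : Fin (t+2) → Finset (Fin n), (∀ i, (g i).card = k) ∧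
      (∀ i j, i ≠ j → Disjoint (g i) (g j)) := by
  have hbnd : ∀ i : Fin (t+2), ∀ m ∈ Finset.Ico ((i : ℕ) * k) ((i : ℕ) * k + k), m < n := by
    intro i m hm
    rw [Finset.mem_Ico] at hm
    have h1 : (i : ℕ) + 1 ≤ t + 2 := i.2
    have h2 : ((i : ℕ) + 1) * k ≤ (t + 2) * k := Nat.mul_le_mul_right _ h1
    have h3 : (t + 2) * k = k * (t + 2) := by ring
    have h4 : ((i : ℕ) + 1) * k = (i : ℕ) * k + k := by ring
    omega
  refine ⟨fun i => (Finset.Ico ((i : ℕ) * k) ((i : ℕ) * k + k)).attachFin (hbnd i), ?_, ?_⟩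
  · intro i
    rw [Finset.card_attachFin, Nat.card_Ico]
    omega
  · intro i j hij
    rw [Finset.disjoint_left]
    intro x hxi hxj
    rw [Finset.mem_attachFin, Finset.mem_Ico] at hxi hxj
    have hijv : (i : ℕ) ≠ (j : ℕ) := fun h => hij (Fin.ext h)
    rcases Nat.lt_or_ge (i : ℕ) (j : ℕ) with h | h
    · have : ((i : ℕ) + 1) * k ≤ (j : ℕ) * k := Nat.mul_le_mul_right _ (by omega)
      have h4 : ((i : ℕ) + 1) * k = (i : ℕ) * k + k := by ring
      omega
    · have hjlt : (j : ℕ) < (i : ℕ) := by omega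
      have : ((j : ℕ) + 1) * k ≤ (i : ℕ) * k := Nat.mul_le_mul_right _ (by omega)
      have h4 : ((j : ℕ) + 1) * k = (j : ℕ) * k + k := by ring
      omega

lemma upperBound (n k a t : ℕ) (hak : a + 2 ≤ k) (ht1 : 1 ≤ t)
    (htk : t * (a+1) ≤ k) (hkt : k < (t+1) * (a+1)) (hn : k * (t + 2) ≤ n) :
    ∃ W : Set (KV n k), (genKneser n k a).IsZeroBlocking W ∧ W.ncard = t + 2 := by
  classical
  obtain ⟨g, hgcard, hgdisj⟩ := disjSets n k t hn
  set v : Fin (t+2) → KV n k := fun i => ⟨g i, hgcard i⟩ with hv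
  have hvinj : Function.Injective v := by
    intro i j h
    by_contra hij
    have hdisj := hgdisj i j hij
    have hne : (g i).Nonempty := Finset.card_pos.mp (by rw [hgcard i]; omega)
    have hgeq : g i = g j := congrArg Subtype.val h
    rw [← hgeq] at hdisj
    exact hne.ne_empty ((Finset.disjoint_self_iff_empty _).mp hdisj)
  set S : Finset (KV n k) := Finset.univ.image v with hS
  -- counting: every vertex outside S has at least two neighbors in S
  have hcount : ∀ u : KV n k, 2 ≤ (Finset.univ.filter
      (fun i : Fin (t+2) => ((u : Finset (Fin n)) ∩ g i).card ≤ a)).card := by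
    intro u
    set N := Finset.univ.filter (fun i : Fin (t+2) => ((u : Finset (Fin n)) ∩ g i).card ≤ a)
      with hN
    set M := Finset.univ.filter (fun i : Fin (t+2) =>
      ¬ ((u : Finset (Fin n)) ∩ g i).card ≤ a) with hM
    have hNM : N.card + M.card = t + 2 := by
      rw [hN, hM, Finset.card_filter_add_card_filter_not, Finset.card_univ,
        Fintype.card_fin]
    have hMsum : M.card * (a+1) ≤ k := by
      have h1 : M.card * (a+1) ≤ ∑ i ∈ M, ((u : Finset (Fin n)) ∩ g i).card := by
        have := Finset.card_nsmul_le_sum M (fun i => ((u : Finset (Fin n)) ∩ g i).card) (a+1)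
          (fun i hi => by
            show a + 1 ≤ ((u : Finset (Fin n)) ∩ g i).card
            have := (Finset.mem_filter.mp hi).2
            omega)
        simpa using this
      have h2 : ∑ i ∈ M, ((u : Finset (Fin n)) ∩ g i).card
          = (M.biUnion (fun i => (u : Finset (Fin n)) ∩ g i)).card := by
        rw [Finset.card_biUnion]
        intro i hi j hj hij
        exact Finset.disjoint_left.mpr (fun x hxi hxj =>
          Finset.disjoint_left.mp (hgdisj i j hij) (Finset.mem_inter.mp hxi).2
            (Finset.mem_inter.mp hxj).2)
      have h3 : (M.biUnion (fun i => (u : Finset (Fin n)) ∩ g i)).card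
          ≤ (u : Finset (Fin n)).card := by
        apply Finset.card_le_card
        intro x hx
        obtain ⟨i, hi, hxi⟩ := Finset.mem_biUnion.mp hx
        exact (Finset.mem_inter.mp hxi).1
      have h4 := u.2
      omega
    have hMt : M.card ≤ t := by
      by_contra h
      push_neg at h
      have : (t+1) * (a+1) ≤ M.card * (a+1) := Nat.mul_le_mul_right _ h
      omega
    omega
  have hforce : ∀ x : KV n k, (genKneser n k a).Forced (↑S : Set (KV n k))ᶜ x → x ∉ S := by
    intro x hx
    induction hx with
    | init h => simpa using h
    | @force u w hu hadj hall ihu ihall =>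
      intro hwS
      have h2 := hcount u
      obtain ⟨i, hi, j, hj, hij⟩ := Finset.one_lt_card.mp (Nat.lt_of_lt_of_le Nat.one_lt_two h2)
      have hvij : v i ≠ v j := fun h => hij (hvinj h)
      have hxS : ∀ m : Fin (t+2), v m ∈ S := fun m => Finset.mem_image_of_mem v (Finset.mem_univ m)
      have hpick : ∃ m : Fin (t+2), ((u : Finset (Fin n)) ∩ g m).card ≤ a ∧ v m ≠ w := by
        by_cases hwi : v i = w
        · exact ⟨j, (Finset.mem_filter.mp hj).2, fun h => hvij (hwi.trans h.symm)⟩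
        · exact ⟨i, (Finset.mem_filter.mp hi).2, hwi⟩
      obtain ⟨m, hm1, hm2⟩ := hpick
      have huS : u ∉ S := ihu
      have hadjm : (genKneser n k a).Adj u (v m) := by
        refine ⟨fun h => huS (h ▸ hxS m), ?_⟩
        exact hm1
      exact ihall (v m) hadjm hm2 (hxS m)
  refine ⟨↑S, ?_, ?_⟩
  · intro hzf
    exact hforce (v 0) (hzf (v 0)) (Finset.mem_image_of_mem v (Finset.mem_univ 0))
  · rw [Set.ncard_coe_finset, hS, Finset.card_image_of_injective _ hvinj, Finset.card_univ,
      Fintype.card_fin]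

end Rest


theorem stmt12 (n k a : ℕ) (hak : a + 2 ≤ k)
    (hn : k * (⌈((k : ℚ) - a) / (a + 1)⌉₊ + 2) ≤ n) :
    (genKneser n k a).zeroBlockingNumber = ⌈((k : ℚ) - a) / (a + 1)⌉₊ + 2 := by
  rw [myCeil a k hak] at hn ⊢
  set t := k / (a + 1) with htdef
  have ht1 : 1 ≤ t := (Nat.one_le_div_iff (Nat.succ_pos a)).mpr (by omega)
  have htk : t * (a+1) ≤ k := Nat.div_mul_le_self k (a+1)
  have hkt : k < (t + 1) * (a+1) :=
    (Nat.div_lt_iff_lt_mul (Nat.succ_pos a)).mp (Nat.lt_succ_self _)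
  obtain ⟨W, hWblock, hWcard⟩ := upperBound n k a t hak ht1 htk hkt hn
  rw [SimpleGraph.zeroBlockingNumber]
  apply le_antisymm
  · exact Nat.sInf_le ⟨W, hWblock, hWcard⟩
  · refine le_csInf ⟨t + 2, W, hWblock, hWcard⟩ ?_
    rintro m ⟨W', hW'block, rfl⟩
    exact lowerBound n k a t hak ht1 htk hn W' hW'block
end

section
/- For all integers n ≥ k > a ≥ 0, B(K(n,k,a)) ≤ k - a + 2. Moreover, when a ≥ 1 and n ≥ k+1, the family {[k+1]\{i} : 1 ≤ i ≤ k-a+2} is a zero blocking set of K(n,k,a). -/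
private lemma blocking_of_static {V : Type*} (G : SimpleGraph V) (W : Set V)
    (hne : W.Nonempty)
    (hstat : ∀ u, u ∉ W → ∀ w ∈ W, G.Adj u w → ∃ x ∈ W, x ≠ w ∧ G.Adj u x) :
    G.IsZeroBlocking W := by
  intro hzf
  obtain ⟨w₀, hw₀⟩ := hne
  have key : ∀ v, G.Forced Wᶜ v → v ∉ W := by
    intro v hv
    induction hv with
    | init h => exact h
    | @force u w hu hadj hall ihu ihall =>
      intro hwW
      obtain ⟨x, hxW, hxne, hxadj⟩ := hstat u ihu w hwW hadj
      exact ihall x hxadj hxne hxW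
  exact key w₀ (hzf w₀) hw₀

private lemma zbn_le {V : Type*} (G : SimpleGraph V) (W : Set V) (m : ℕ)
    (hb : G.IsZeroBlocking W) (h : W.ncard ≤ m) : G.zeroBlockingNumber ≤ m :=
  le_trans (Nat.sInf_le ⟨W, hb, rfl⟩) h

private lemma card_filter_lt_fin (n m : ℕ) (hm : m ≤ n) :
    (Finset.univ.filter (fun x : Fin n => (x:ℕ) < m)).card = m := by
  have h : ∀ a ∈ Finset.range m, a < n := fun a ha => lt_of_lt_of_le (Finset.mem_range.mp ha) hm
  have e : Finset.univ.filter (fun x : Fin n => (x:ℕ) < m) = (Finset.range m).attachFin h := by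
    ext x; simp [Finset.mem_attachFin]
  rw [e, Finset.card_attachFin, Finset.card_range]

private lemma card_filter_band_fin (n c d : ℕ) (hcd : c ≤ d) (hd : d ≤ n) :
    (Finset.univ.filter (fun x : Fin n => c ≤ (x:ℕ) ∧ (x:ℕ) < d)).card = d - c := by
  have e : Finset.univ.filter (fun x : Fin n => c ≤ (x:ℕ) ∧ (x:ℕ) < d)
      = (Finset.univ.filter (fun x : Fin n => (x:ℕ) < d)) \
        (Finset.univ.filter (fun x : Fin n => (x:ℕ) < c)) := by
    ext x; simp; omega
  rw [e, Finset.card_sdiff_of_subset, card_filter_lt_fin n d hd, card_filter_lt_fin n c (le_trans hcd hd)]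
  intro x hx
  simp only [Finset.mem_filter] at *
  exact ⟨hx.1, by omega⟩

private def WW (n k a : ℕ) : Set {s : Finset (Fin n) // s.card = k} :=
  {A | ∃ i : Fin n, (i : ℕ) < k - a + 2 ∧
      (A : Finset (Fin n)) = (Finset.univ.filter (fun x : Fin n => (x : ℕ) < k + 1)) \ {i}}

private lemma static_main (n k a : ℕ) (ha : 1 ≤ a) (hak : a < k) (hkn : k + 1 ≤ n) :
    ∀ u, u ∉ WW n k a → ∀ w ∈ WW n k a, (genKneser n k a).Adj u w →
      ∃ x ∈ WW n k a, x ≠ w ∧ (genKneser n k a).Adj u x := by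
  intro u _ w hw hadj
  obtain ⟨i, hi, hwv⟩ := hw
  obtain ⟨hne, hcard⟩ := hadj
  set K1 : Finset (Fin n) := Finset.univ.filter (fun x : Fin n => (x:ℕ) < k + 1) with hK1def
  have hK1 : K1.card = k + 1 := card_filter_lt_fin n (k+1) hkn
  have hiK1 : i ∈ K1 := by rw [hK1def]; simp; omega
  set P : Finset (Fin n) := u.1 ∩ K1 with hPdef
  have hPw : (u : Finset (Fin n)) ∩ (w : Finset (Fin n)) = P \ {i} := by
    rw [hwv, ← Finset.inter_sdiff_assoc]
  have mkcard : ∀ j : Fin n, j ∈ K1 → (K1 \ {j}).card = k := by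
    intro j hj
    rw [← Finset.erase_eq, Finset.card_erase_of_mem hj, hK1]
    omega
  have mk : ∀ j : Fin n, (j:ℕ) < k - a + 2 → j ≠ i →
      ((u : Finset (Fin n)) ∩ (K1 \ {j})).card ≤ a → u.1 ≠ K1 \ {j} →
      ∃ x ∈ WW n k a, x ≠ w ∧ (genKneser n k a).Adj u x := by
    intro j hjlt hjne hcj hunej
    have hjK1 : j ∈ K1 := by rw [hK1def]; simp; omega
    refine ⟨⟨K1 \ {j}, mkcard j hjK1⟩, ⟨j, hjlt, rfl⟩, ?_,
      fun h => hunej (congrArg Subtype.val h), hcj⟩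
    intro h
    have h2 : K1 \ {j} = (w : Finset (Fin n)) := congrArg Subtype.val h
    rw [hwv] at h2
    have hi1 : i ∈ K1 \ {j} := Finset.mem_sdiff.2 ⟨hiK1, by
      simp only [Finset.mem_singleton]; exact fun hh => hjne hh.symm⟩
    rw [h2] at hi1
    exact (Finset.mem_sdiff.1 hi1).2 (Finset.mem_singleton_self i)
  have smallcase : P.card ≤ a → ∃ x ∈ WW n k a, x ≠ w ∧ (genKneser n k a).Adj u x := by
    intro hPc
    have pick : ∃ j : Fin n, (j:ℕ) < k - a + 2 ∧ j ≠ i := by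
      rcases Nat.eq_zero_or_pos (i:ℕ) with h0 | h0
      · refine ⟨⟨1, by omega⟩, by show (1:ℕ) < k - a + 2; omega, ?_⟩
        intro h; rw [Fin.ext_iff] at h; simp at h; omega
      · refine ⟨⟨0, by omega⟩, by show (0:ℕ) < k - a + 2; omega, ?_⟩
        intro h; rw [Fin.ext_iff] at h; simp at h; omega
    obtain ⟨j, hjlt, hjne⟩ := pick
    apply mk j hjlt hjne
    · calc ((u : Finset (Fin n)) ∩ (K1 \ {j})).card
          ≤ P.card := Finset.card_le_card (by
            rw [hPdef]
            exact Finset.inter_subset_inter (Finset.Subset.refl _) Finset.sdiff_subset)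
        _ ≤ a := hPc
    · intro h
      have hjK1 : j ∈ K1 := by rw [hK1def]; simp; omega
      have heq : P = K1 \ {j} := by
        rw [hPdef, h, Finset.inter_eq_left.2 Finset.sdiff_subset]
      rw [heq, mkcard j hjK1] at hPc
      omega
  by_cases hiu : i ∈ u.1
  · have hiP : i ∈ P := Finset.mem_inter.2 ⟨hiu, hiK1⟩
    have hcard' : (P \ {i}).card ≤ a := by rwa [hPw] at hcard
    have hPe : (P \ {i}).card = P.card - 1 := by
      rw [← Finset.erase_eq, Finset.card_erase_of_mem hiP]
    by_cases ht : P.card ≤ a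
    · exact smallcase ht
    · have hPc1 : P.card = a + 1 := by omega
      have hex : ∃ j ∈ P.erase i, (j:ℕ) < k - a + 2 := by
        by_contra hno
        push_neg at hno
        have hsub : P.erase i ⊆ Finset.univ.filter
            (fun x : Fin n => k - a + 2 ≤ (x:ℕ) ∧ (x:ℕ) < k + 1) := by
          intro x hx
          have hxP := Finset.mem_of_mem_erase hx
          have hxK1 : x ∈ K1 := (Finset.mem_inter.1 hxP).2
          rw [hK1def] at hxK1
          simp only [Finset.mem_filter, Finset.mem_univ, true_and] at hxK1 ⊢
          have := hno x hx
          omega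
        have h1 := Finset.card_le_card hsub
        rw [Finset.card_erase_of_mem hiP, hPc1,
          card_filter_band_fin n _ _ (by omega) hkn] at h1
        omega
      obtain ⟨j, hjPe, hjlt⟩ := hex
      have hjne : j ≠ i := Finset.ne_of_mem_erase hjPe
      have hjP : j ∈ P := Finset.mem_of_mem_erase hjPe
      apply mk j hjlt hjne
      · rw [← Finset.inter_sdiff_assoc, ← hPdef, ← Finset.erase_eq,
          Finset.card_erase_of_mem hjP]
        omega
      · intro h
        have hju : j ∈ u.1 := (Finset.mem_inter.1 hjP).1
        rw [h] at hju
        exact (Finset.mem_sdiff.1 hju).2 (Finset.mem_singleton_self j)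
  · apply smallcase
    have h2 := hcard
    rw [hPw] at h2
    have he : P \ {i} = P := by
      rw [← Finset.erase_eq, Finset.erase_eq_of_notMem]
      intro h; exact hiu (Finset.mem_inter.1 h).1
    rwa [he] at h2

private lemma WW_nonempty (n k a : ℕ) (hkn : k + 1 ≤ n) : (WW n k a).Nonempty := by
  set K1 : Finset (Fin n) := Finset.univ.filter (fun x : Fin n => (x:ℕ) < k + 1) with hK1def
  have hK1 : K1.card = k + 1 := card_filter_lt_fin n (k+1) hkn
  obtain ⟨i, hi0⟩ : ∃ i : Fin n, (i:ℕ) = 0 := ⟨⟨0, by omega⟩, rfl⟩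
  have hiK1 : i ∈ K1 := by rw [hK1def]; simp; omega
  have hc : (K1 \ {i}).card = k := by
    rw [← Finset.erase_eq, Finset.card_erase_of_mem hiK1, hK1]
    omega
  exact ⟨⟨K1 \ {i}, hc⟩, i, by omega, rfl⟩

private lemma WW_ncard (n k a : ℕ) (ha : 1 ≤ a) (hak : a < k) (hkn : k + 1 ≤ n) :
    (WW n k a).ncard ≤ k - a + 2 := by
  classical
  set K1 : Finset (Fin n) := Finset.univ.filter (fun x : Fin n => (x:ℕ) < k + 1) with hK1def
  have hK1 : K1.card = k + 1 := card_filter_lt_fin n (k+1) hkn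
  have v0 : {s : Finset (Fin n) // s.card = k} :=
    ⟨Finset.univ.filter (fun x : Fin n => (x:ℕ) < k), card_filter_lt_fin n k (by omega)⟩
  set g : Fin n → {s : Finset (Fin n) // s.card = k} := fun i =>
    if h : (K1 \ {i}).card = k then ⟨K1 \ {i}, h⟩ else v0 with hg
  set T : Finset (Fin n) := Finset.univ.filter (fun i : Fin n => (i:ℕ) < k - a + 2) with hT
  have hWeq : WW n k a = g '' ↑T := by
    ext A
    constructor
    · rintro ⟨i, hi, hA⟩
      refine ⟨i, Finset.mem_coe.2 (by rw [hT]; simp [hi]), ?_⟩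
      have hc : (K1 \ {i}).card = k := by rw [← hA]; exact A.2
      simp only [hg]
      rw [dif_pos hc]
      exact Subtype.ext hA.symm
    · rintro ⟨i, hiT, rfl⟩
      have hi : (i:ℕ) < k - a + 2 := by
        have := Finset.mem_coe.1 hiT
        rw [hT] at this
        simpa using this
      have hiK1 : i ∈ K1 := by rw [hK1def]; simp; omega
      have hc : (K1 \ {i}).card = k := by
        rw [← Finset.erase_eq, Finset.card_erase_of_mem hiK1, hK1]
        omega
      refine ⟨i, hi, ?_⟩
      simp only [hg]
      rw [dif_pos hc]
  rw [hWeq]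
  calc (g '' ↑T).ncard ≤ (↑T : Set (Fin n)).ncard := Set.ncard_image_le T.finite_toSet
    _ = T.card := Set.ncard_coe_finset T
    _ = k - a + 2 := by rw [hT]; exact card_filter_lt_fin n _ (by omega)

private lemma case_nk (n k a : ℕ) (hak : a < k) (hnk : k = n) :
    (genKneser n k a).zeroBlockingNumber ≤ k - a + 2 := by
  have hv : ((Finset.univ : Finset (Fin n))).card = k := by simp [← hnk]
  set v : {s : Finset (Fin n) // s.card = k} := ⟨Finset.univ, hv⟩ with hvdef
  have hall : ∀ u : {s : Finset (Fin n) // s.card = k}, u = v := by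
    intro u
    exact Subtype.ext (Finset.eq_univ_of_card _ (by simp [u.2, ← hnk]))
  apply zbn_le _ ({v} : Set _) _ ?_ ?_
  · refine blocking_of_static _ _ ⟨v, rfl⟩ ?_
    intro u hu w hw hadj
    exact absurd (hall u) (by simpa using hu)
  · rw [Set.ncard_singleton]; omega

private lemma case_mid (n k a : ℕ) (hak : a < k) (ha0 : a = 0) (hkn : k ≤ n) (h2 : n < 2*k) :
    (genKneser n k a).zeroBlockingNumber ≤ k - a + 2 := by
  subst ha0
  set v : {s : Finset (Fin n) // s.card = k} :=
    ⟨Finset.univ.filter (fun x : Fin n => (x:ℕ) < k), card_filter_lt_fin n k hkn⟩ with hvdef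
  apply zbn_le _ ({v} : Set _) _ ?_ ?_
  · refine blocking_of_static _ _ ⟨v, rfl⟩ ?_
    intro u hu w hw hadj
    exfalso
    obtain ⟨hne, hcard⟩ := hadj
    have h0 : ((u : Finset (Fin n)) ∩ (w : Finset (Fin n))).card = 0 := Nat.le_zero.1 hcard
    have hdisj : Disjoint (u : Finset (Fin n)) (w : Finset (Fin n)) :=
      Finset.disjoint_iff_inter_eq_empty.2 (Finset.card_eq_zero.1 h0)
    have hcu := Finset.card_union_of_disjoint hdisj
    have hle := Finset.card_le_univ ((u : Finset (Fin n)) ∪ (w : Finset (Fin n)))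
    rw [hcu] at hle
    rw [u.2, w.2, Fintype.card_fin] at hle
    omega
  · rw [Set.ncard_singleton]; omega

private lemma case_eq2k (n k a : ℕ) (hak : a < k) (ha0 : a = 0) (h2 : n = 2*k) :
    (genKneser n k a).zeroBlockingNumber ≤ k - a + 2 := by
  subst ha0
  have hk : 0 < k := hak
  have hA : (Finset.univ.filter (fun x : Fin n => (x:ℕ) < k)).card = k :=
    card_filter_lt_fin n k (by omega)
  have hB : (Finset.univ.filter (fun x : Fin n => ¬ (x:ℕ) < k)).card = k := by
    have := Finset.card_filter_add_card_filter_not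
      (s := (Finset.univ : Finset (Fin n))) (fun x : Fin n => (x:ℕ) < k)
    rw [hA, Finset.card_univ, Fintype.card_fin] at this
    omega
  set vA : {s : Finset (Fin n) // s.card = k} :=
    ⟨Finset.univ.filter (fun x : Fin n => (x:ℕ) < k), hA⟩ with hvA
  set vB : {s : Finset (Fin n) // s.card = k} :=
    ⟨Finset.univ.filter (fun x : Fin n => ¬ (x:ℕ) < k), hB⟩ with hvB
  have hne : vA ≠ vB := by
    intro h
    have h1 : (⟨0, by omega⟩ : Fin n) ∈ vA.1 := by simp [hvA]; omega
    rw [h] at h1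
    simp [hvB] at h1
    omega
  apply zbn_le _ ({vA, vB} : Set _) _ ?_ ?_
  · refine blocking_of_static _ _ ⟨vA, Or.inl rfl⟩ ?_
    intro u hu w hw hadj
    exfalso
    obtain ⟨hnuw, hcard⟩ := hadj
    have h0 : ((u : Finset (Fin n)) ∩ (w : Finset (Fin n))).card = 0 := Nat.le_zero.1 hcard
    have hdisj : Disjoint (u : Finset (Fin n)) (w : Finset (Fin n)) :=
      Finset.disjoint_iff_inter_eq_empty.2 (Finset.card_eq_zero.1 h0)
    simp only [Set.mem_insert_iff, Set.mem_singleton_iff] at hu hw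
    push_neg at hu
    rcases hw with hw | hw
    · apply hu.2
      apply Subtype.ext
      apply Finset.eq_of_subset_of_card_le
      · intro x hx
        simp only [hvB, Finset.mem_filter, Finset.mem_univ, true_and]
        intro hxk
        have hxw : x ∈ (w : Finset (Fin n)) := by
          rw [hw, hvA]
          simp only [Finset.mem_filter, Finset.mem_univ, true_and]
          omega
        exact Finset.disjoint_left.1 hdisj hx hxw
      · rw [u.2, hB]
    · apply hu.1
      apply Subtype.ext
      apply Finset.eq_of_subset_of_card_le
      · intro x hx
        simp only [hvA, Finset.mem_filter, Finset.mem_univ, true_and]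
        by_contra hxk
        have hxw : x ∈ (w : Finset (Fin n)) := by
          rw [hw, hvB]
          simp only [Finset.mem_filter, Finset.mem_univ, true_and]
          omega
        exact Finset.disjoint_left.1 hdisj hx hxw
      · rw [u.2, hA]
  · rw [Set.ncard_pair hne]; omega

private lemma case_big (n k a : ℕ) (hak : a < k) (ha0 : a = 0) (h2 : 2*k + 1 ≤ n) :
    (genKneser n k a).zeroBlockingNumber ≤ k - a + 2 := by
  classical
  subst ha0
  have hk : 0 < k := hak
  set S : Finset (Fin n) := Finset.univ.filter (fun x : Fin n => (x:ℕ) < k - 1) with hSdef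
  have hS : S.card = k - 1 := card_filter_lt_fin n (k-1) (by omega)
  set T : Finset (Fin n) :=
    Finset.univ.filter (fun x : Fin n => k - 1 ≤ (x:ℕ) ∧ (x:ℕ) < 2*k + 1) with hTdef
  have hT : T.card = k + 2 := by
    rw [hTdef, card_filter_band_fin n (k-1) (2*k+1) (by omega) h2]
    omega
  have hyS : ∀ y ∈ T, y ∉ S := by
    intro y hy
    rw [hTdef] at hy; rw [hSdef]
    simp only [Finset.mem_filter, Finset.mem_univ, true_and] at hy ⊢
    omega
  have hins : ∀ y ∈ T, (insert y S).card = k := by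
    intro y hy
    rw [Finset.card_insert_of_notMem (hyS y hy), hS]
    omega
  set W : Set {s : Finset (Fin n) // s.card = k} :=
    {A | ∃ y : Fin n, y ∈ T ∧ (A : Finset (Fin n)) = insert y S} with hWdef
  obtain ⟨y0, hy00⟩ : ∃ y : Fin n, (y:ℕ) = k := ⟨⟨k, by omega⟩, rfl⟩
  have hy0T : y0 ∈ T := by
    rw [hTdef]
    simp only [Finset.mem_filter, Finset.mem_univ, true_and]
    omega
  apply zbn_le _ W _ ?_ ?_
  · refine blocking_of_static _ _ ⟨⟨insert y0 S, hins y0 hy0T⟩, y0, hy0T, rfl⟩ ?_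
    intro u hu w hw hadj
    obtain ⟨y, hyT, hwv⟩ := hw
    obtain ⟨hnuw, hcard⟩ := hadj
    have h0 : ((u : Finset (Fin n)) ∩ (w : Finset (Fin n))).card = 0 := Nat.le_zero.1 hcard
    have hdisj : Disjoint (u : Finset (Fin n)) (w : Finset (Fin n)) :=
      Finset.disjoint_iff_inter_eq_empty.2 (Finset.card_eq_zero.1 h0)
    have hyu : y ∉ (u : Finset (Fin n)) := by
      intro hy
      exact Finset.disjoint_left.1 hdisj hy (by rw [hwv]; exact Finset.mem_insert_self y S)
    have hTu : 2 ≤ (T \ (u : Finset (Fin n))).card := by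
      have h1 := Finset.le_card_sdiff (u : Finset (Fin n)) T
      rw [hT, u.2] at h1
      omega
    have hyTu : y ∈ T \ (u : Finset (Fin n)) := Finset.mem_sdiff.2 ⟨hyT, hyu⟩
    have hneT : ((T \ (u : Finset (Fin n))).erase y).Nonempty := by
      rw [← Finset.card_pos, Finset.card_erase_of_mem hyTu]
      omega
    obtain ⟨z, hz⟩ := hneT
    have hzy : z ≠ y := Finset.ne_of_mem_erase hz
    have hzTu := Finset.mem_of_mem_erase hz
    have hzT : z ∈ T := (Finset.mem_sdiff.1 hzTu).1
    have hzu : z ∉ (u : Finset (Fin n)) := (Finset.mem_sdiff.1 hzTu).2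
    refine ⟨⟨insert z S, hins z hzT⟩, ⟨z, hzT, rfl⟩, ?_, ?_, ?_⟩
    · intro h
      have h2' : insert z S = (w : Finset (Fin n)) := congrArg Subtype.val h
      rw [hwv] at h2'
      have : z ∈ insert y S := h2' ▸ Finset.mem_insert_self z S
      rcases Finset.mem_insert.1 this with h3 | h3
      · exact hzy h3
      · exact hyS z hzT h3
    · intro h
      have : z ∈ (u : Finset (Fin n)) := by
        rw [congrArg Subtype.val h]
        exact Finset.mem_insert_self z S
      exact hzu this
    · have : (u : Finset (Fin n)) ∩ insert z S = ∅ := by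
        ext b
        simp only [Finset.mem_inter, Finset.mem_insert, Finset.notMem_empty, iff_false, not_and]
        intro hbu hbz
        rcases hbz with h3 | h3
        · exact hzu (h3 ▸ hbu)
        · exact Finset.disjoint_left.1 hdisj hbu
            (by rw [hwv]; exact Finset.mem_insert_of_mem h3)
      rw [this]
      simp
  · have v0 : {s : Finset (Fin n) // s.card = k} :=
      ⟨Finset.univ.filter (fun x : Fin n => (x:ℕ) < k), card_filter_lt_fin n k (by omega)⟩
    set g : Fin n → {s : Finset (Fin n) // s.card = k} := fun y =>
      if h : (insert y S).card = k then ⟨insert y S, h⟩ else v0 with hg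
    have hWeq : W = g '' ↑T := by
      ext A
      constructor
      · rintro ⟨y, hy, hA⟩
        refine ⟨y, Finset.mem_coe.2 hy, ?_⟩
        have hc : (insert y S).card = k := hins y hy
        simp only [hg]
        rw [dif_pos hc]
        exact Subtype.ext hA.symm
      · rintro ⟨y, hyT, rfl⟩
        have hy := Finset.mem_coe.1 hyT
        refine ⟨y, hy, ?_⟩
        simp only [hg]
        rw [dif_pos (hins y hy)]
    rw [hWeq]
    calc (g '' ↑T).ncard ≤ (↑T : Set (Fin n)).ncard := Set.ncard_image_le T.finite_toSet
      _ = T.card := Set.ncard_coe_finset T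
      _ ≤ k - 0 + 2 := by rw [hT]; omega


theorem stmt13 (n k a : ℕ) (hak : a < k) (hkn : k ≤ n) :
    (genKneser n k a).zeroBlockingNumber ≤ k - a + 2 ∧
    (1 ≤ a → k + 1 ≤ n →
      (genKneser n k a).IsZeroBlocking
        {A : {s : Finset (Fin n) // s.card = k} |
          ∃ i : Fin n, (i : ℕ) < k - a + 2 ∧
            (A : Finset (Fin n)) =
              (Finset.univ.filter (fun x : Fin n => (x : ℕ) < k + 1)) \ {i}}) := by
  have hset : {A : {s : Finset (Fin n) // s.card = k} |
      ∃ i : Fin n, (i : ℕ) < k - a + 2 ∧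
        (A : Finset (Fin n)) =
          (Finset.univ.filter (fun x : Fin n => (x : ℕ) < k + 1)) \ {i}} = WW n k a := rfl
  constructor
  · rcases eq_or_lt_of_le hkn with hnk | hkn'
    · exact case_nk n k a hak hnk
    · rcases Nat.eq_zero_or_pos a with ha0 | ha
      · rcases lt_trichotomy n (2*k) with h | h | h
        · exact case_mid n k a hak ha0 hkn h
        · exact case_eq2k n k a hak ha0 h
        · exact case_big n k a hak ha0 (by omega)
      · exact zbn_le _ (WW n k a) _
          (blocking_of_static _ _ (WW_nonempty n k a hkn')
            (static_main n k a ha hak hkn'))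
          (WW_ncard n k a ha hak hkn')
  · intro ha hkn1
    rw [hset]
    exact blocking_of_static _ _ (WW_nonempty n k a hkn1)
      (static_main n k a ha hak hkn1)
end

section
/- If n = 2k = 4a with a > 0, then in J(n,k,a) any two disjoint k-subsets A and B of [n] are twins (every common vertex adjacent to one is adjacent to the other), and hence B(J(n,k,a)) = 2. -/
section Aux

variable {n k a : ℕ}

lemma adj_iff_card (hk : k = 2 * a) (ha : 0 < a)
    (A C : {s : Finset (Fin n) // s.card = k}) :
    (genJohnson n k a).Adj A C ↔ ((A : Finset (Fin n)) ∩ (C : Finset (Fin n))).card = a := by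
  constructor
  · exact fun h => h.2
  · intro h
    refine ⟨fun hEq => ?_, h⟩
    have hA := A.2
    rw [hEq, Finset.inter_self] at h
    have := C.2
    omega

lemma compl_eq (hn : n = 2 * k) {A B : {s : Finset (Fin n) // s.card = k}}
    (hd : Disjoint (A : Finset (Fin n)) (B : Finset (Fin n))) :
    (B : Finset (Fin n)) = (A : Finset (Fin n))ᶜ := by
  have hsub : (B : Finset (Fin n)) ⊆ (A : Finset (Fin n))ᶜ := by
    intro x hx
    rw [Finset.mem_compl]
    exact fun hxa => (Finset.disjoint_left.mp hd hxa) hx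
  refine Finset.eq_of_subset_of_card_le hsub ?_
  rw [Finset.card_compl, Fintype.card_fin, A.2, B.2]
  omega

lemma card_sum (hn : n = 2 * k) {A B : {s : Finset (Fin n) // s.card = k}}
    (hd : Disjoint (A : Finset (Fin n)) (B : Finset (Fin n)))
    (C : {s : Finset (Fin n) // s.card = k}) :
    ((A : Finset (Fin n)) ∩ C).card + ((B : Finset (Fin n)) ∩ C).card = k := by
  rw [compl_eq hn hd]
  have h1 : (A : Finset (Fin n))ᶜ ∩ (C : Finset (Fin n)) = (C : Finset (Fin n)) \ A := by
    ext x; simp [Finset.mem_sdiff, and_comm]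
  rw [h1, Finset.inter_comm]
  rw [Finset.card_inter_add_card_sdiff]
  exact C.2

lemma twins (hn : n = 2 * k) (hk : k = 2 * a) (ha : 0 < a)
    {A B : {s : Finset (Fin n) // s.card = k}}
    (hd : Disjoint (A : Finset (Fin n)) (B : Finset (Fin n)))
    (C : {s : Finset (Fin n) // s.card = k}) :
    (genJohnson n k a).Adj A C ↔ (genJohnson n k a).Adj B C := by
  rw [adj_iff_card hk ha, adj_iff_card hk ha]
  have := card_sum hn hd C
  omega

lemma exists_neighbor (hn : n = 2 * k) (hk : k = 2 * a) (ha : 0 < a)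
    (A : {s : Finset (Fin n) // s.card = k}) :
    ∃ C, (genJohnson n k a).Adj A C := by
  obtain ⟨A', hA'sub, hA'card⟩ := Finset.exists_subset_card_eq (s := (A : Finset (Fin n))) (n := a)
    (by rw [A.2]; omega)
  obtain ⟨D, hDsub, hDcard⟩ := Finset.exists_subset_card_eq (s := ((A : Finset (Fin n))ᶜ)) (n := a)
    (by rw [Finset.card_compl, Fintype.card_fin, A.2]; omega)
  have hdisj : Disjoint A' D := by
    refine Finset.disjoint_left.mpr fun x hx hxD => ?_
    exact (Finset.mem_compl.mp (hDsub hxD)) (hA'sub hx)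
  have hcard : (A' ∪ D).card = k := by
    rw [Finset.card_union_of_disjoint hdisj, hA'card, hDcard]; omega
  refine ⟨⟨A' ∪ D, hcard⟩, (adj_iff_card hk ha _ _).mpr ?_⟩
  have : (A : Finset (Fin n)) ∩ (A' ∪ D) = A' := by
    rw [Finset.inter_union_distrib_left]
    have h1 : (A : Finset (Fin n)) ∩ A' = A' := Finset.inter_eq_right.mpr hA'sub
    have h2 : (A : Finset (Fin n)) ∩ D = ∅ := by
      refine Finset.eq_empty_of_forall_notMem fun x hx => ?_
      rw [Finset.mem_inter] at hx
      exact (Finset.mem_compl.mp (hDsub hx.2)) hx.1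
    rw [h1, h2, Finset.union_empty]
  rw [this, hA'card]

lemma exists_disjoint_pair (hn : n = 2 * k) (hk : k = 2 * a) (ha : 0 < a) :
    ∃ A B : {s : Finset (Fin n) // s.card = k},
      A ≠ B ∧ Disjoint (A : Finset (Fin n)) (B : Finset (Fin n)) := by
  obtain ⟨A, -, hAcard⟩ := Finset.exists_subset_card_eq (s := (Finset.univ : Finset (Fin n))) (n := k)
    (by rw [Finset.card_univ, Fintype.card_fin]; omega)
  have hBcard : (Aᶜ).card = k := by
    rw [Finset.card_compl, Fintype.card_fin, hAcard]; omega
  refine ⟨⟨A, hAcard⟩, ⟨Aᶜ, hBcard⟩, ?_, ?_⟩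
  · intro h
    have : A = Aᶜ := congrArg Subtype.val h
    have hx : A.Nonempty := Finset.card_pos.mp (by omega)
    obtain ⟨x, hx⟩ := hx
    have := this ▸ hx
    exact (Finset.mem_compl.mp this) hx
  · exact disjoint_compl_right

end Aux

theorem stmt15 (n k a : ℕ) (h1 : n = 2 * k) (h2 : n = 4 * a) (ha : 0 < a) :
    (∀ A B : {s : Finset (Fin n) // s.card = k},
      Disjoint (A : Finset (Fin n)) (B : Finset (Fin n)) →
      ∀ C, (genJohnson n k a).Adj A C ↔ (genJohnson n k a).Adj B C) ∧
    (genJohnson n k a).zeroBlockingNumber = 2 := by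
  have hk : k = 2 * a := by omega
  have htw : ∀ A B : {s : Finset (Fin n) // s.card = k},
      Disjoint (A : Finset (Fin n)) (B : Finset (Fin n)) →
      ∀ C, (genJohnson n k a).Adj A C ↔ (genJohnson n k a).Adj B C :=
    fun A B hd C => twins h1 hk ha hd C
  refine ⟨htw, ?_⟩
  set G := genJohnson n k a with hG
  set S := {m | ∃ W : Set {s : Finset (Fin n) // s.card = k},
      G.IsZeroBlocking W ∧ W.ncard = m} with hS
  obtain ⟨A, B, hAB, hd⟩ := exists_disjoint_pair h1 hk ha (n := n)
  have h2mem : 2 ∈ S := by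
    refine ⟨{A, B}, ?_, ?_⟩
    · intro hforce
      have key : ∀ v, G.Forced ({A, B} : Set _)ᶜ v → v ≠ A ∧ v ≠ B := by
        intro v hv
        induction hv with
        | init h => simpa using h
        | @force u w hu hadj hall ihu ih =>
          constructor
          · intro hwA
            rw [hwA] at hadj
            have hadjB : G.Adj u B := ((htw A B hd u).mp hadj.symm).symm
            have hBw : B ≠ w := fun h => hAB (h.trans hwA).symm
            exact (ih B hadjB hBw).2 rfl
          · intro hwB
            rw [hwB] at hadj
            have hadjA : G.Adj u A := ((htw A B hd u).mpr hadj.symm).symm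
            have hAw : A ≠ w := fun h => hAB (h.trans hwB)
            exact (ih A hadjA hAw).1 rfl
      exact (key A (hforce A)).1 rfl
    · exact Set.ncard_pair hAB
  have h0 : 0 ∉ S := by
    rintro ⟨W, hblk, hcard⟩
    have : W = ∅ := (Set.ncard_eq_zero (Set.toFinite W)).mp hcard
    subst this
    exact hblk fun v => SimpleGraph.Forced.init (by simp)
  have h1' : 1 ∉ S := by
    rintro ⟨W, hblk, hcard⟩
    obtain ⟨v, rfl⟩ := Set.ncard_eq_one.mp hcard
    refine hblk fun u => ?_
    by_cases huv : u = v
    · subst huv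
      obtain ⟨C, hadj⟩ := exists_neighbor h1 hk ha u
      have hCu : C ≠ u := fun h => hadj.1 h.symm
      refine SimpleGraph.Forced.force (u := C)
        (SimpleGraph.Forced.init (by simp [hCu])) hadj.symm ?_
      intro x hx hxu
      exact SimpleGraph.Forced.init (by simp [hxu])
    · exact SimpleGraph.Forced.init (by simp [huv])
  have hne : S.Nonempty := ⟨2, h2mem⟩
  have hmem := Nat.sInf_mem hne
  have hle : sInf S ≤ 2 := Nat.sInf_le h2mem
  show sInf S = 2
  interval_cases h : sInf S
  · exact absurd (h ▸ hmem) h0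
  · exact absurd (h ▸ hmem) h1'
  · rfl
end
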